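/- arXiv:2309.06835 — 10 statements merged into one kernel-verified Lean document; each statement's English description precedes it below -/
import Mathlib

section
/- Let (x,u,a) ∈ X × U × A and let Π : X → Finset U and M : X → Finset A be set-valued policies with Π(y) and M(y) nonempty for every y ∈ X (modeling the supports of stochastic protagonist and adversary policies). Define the compatible-trajectory safety value W(x,u,a) as the infimum, over all sequences with x_0 = x, u_0 = u, a_0 = a and, for t ≥ 1, x_t = f x_{t-1} u_{t-1} a_{t-1}, u_t ∈ Π(x_t), a_t ∈ M(x_t), of ⨅_{t ∈ ℕ} h(x_t). Then there exist a deterministic protagonist policy π with π(y) ∈ Π(y) for all y and a deterministic adversary policy μ with μ(y) ∈ M(y) for all y such that W(x,u,a) = Q_h^{π,μ}(x,u,a). -/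
/-- One step of the closed-loop system driven by deterministic policies `π` and `μ`:
from `(x, u, a)` we move to `x' = f x u a` and play `u' = π x'`, `a' = μ x'`. -/
def stepFn {X U A : Type*} (f : X → U → A → X) (π : X → U) (μ : X → A)
    (p : X × U × A) : X × U × A :=
  (f p.1 p.2.1 p.2.2, π (f p.1 p.2.1 p.2.2), μ (f p.1 p.2.1 p.2.2))

/-- Safety value `Q_h^{π,μ}(x,u,a) = ⨅_{t ∈ ℕ} h(x_t)` of a pair of deterministic
protagonist/adversary policies. -/
noncomputable def Qh {X U A : Type*} (f : X → U → A → X) (h : X → ℝ)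
    (π : X → U) (μ : X → A) (p : X × U × A) : ℝ :=
  ⨅ t : ℕ, h (((stepFn f π μ)^[t] p).1)

/-- The compatible-trajectory safety value `W(x,u,a)` of a pair of set-valued policies
`Pol : X → Finset U` and `Adv : X → Finset A`: the infimum, over all sequences with
`x_0 = x`, `u_0 = u`, `a_0 = a` and, for `t ≥ 1`, `x_t = f x_{t-1} u_{t-1} a_{t-1}`,
`u_t ∈ Pol (x_t)`, `a_t ∈ Adv (x_t)`, of `⨅_{t ∈ ℕ} h (x_t)`. -/
noncomputable def compatTrajValue {X U A : Type*} (f : X → U → A → X) (h : X → ℝ)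
    (Pol : X → Finset U) (Adv : X → Finset A) (x : X) (u : U) (a : A) : ℝ :=
  sInf { v : ℝ | ∃ (xs : ℕ → X) (us : ℕ → U) (as : ℕ → A),
    xs 0 = x ∧ us 0 = u ∧ as 0 = a ∧
    (∀ t : ℕ, xs (t + 1) = f (xs t) (us t) (as t)) ∧
    (∀ t : ℕ, us (t + 1) ∈ Pol (xs (t + 1))) ∧
    (∀ t : ℕ, as (t + 1) ∈ Adv (xs (t + 1))) ∧
    v = ⨅ t : ℕ, h (xs t) }

/-- There exist deterministic policies selecting from the set-valued policies and
achieving the compatible-trajectory safety value. -/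
theorem exists_deterministic_policies_attaining_value {X U A : Type*}
    [Fintype X] [Nonempty X] [Fintype U] [Nonempty U] [Fintype A] [Nonempty A]
    (f : X → U → A → X) (h : X → ℝ)
    (Pol : X → Finset U) (Adv : X → Finset A)
    (hPol : ∀ y : X, (Pol y).Nonempty) (hAdv : ∀ y : X, (Adv y).Nonempty)
    (x : X) (u : U) (a : A) :
    ∃ (π : X → U) (μ : X → A), (∀ y : X, π y ∈ Pol y) ∧ (∀ y : X, μ y ∈ Adv y) ∧
      compatTrajValue f h Pol Adv x u a = Qh f h π μ (x, u, a) := by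
  classical
  set S : Set ℝ := { v : ℝ | ∃ (xs : ℕ → X) (us : ℕ → U) (as : ℕ → A),
    xs 0 = x ∧ us 0 = u ∧ as 0 = a ∧
    (∀ t : ℕ, xs (t + 1) = f (xs t) (us t) (as t)) ∧
    (∀ t : ℕ, us (t + 1) ∈ Pol (xs (t + 1))) ∧
    (∀ t : ℕ, as (t + 1) ∈ Adv (xs (t + 1))) ∧
    v = ⨅ t : ℕ, h (xs t) } with hSdef
  have hW : compatTrajValue f h Pol Adv x u a = sInf S := rfl
  -- boundedness facts
  have hbdd : ∀ xs : ℕ → X, BddBelow (Set.range fun t => h (xs t)) := fun xs =>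
    ((Set.finite_range h).subset (by rintro _ ⟨t, rfl⟩; exact ⟨xs t, rfl⟩)).bddBelow
  have hattain : ∀ xs : ℕ → X, ∃ T : ℕ, (⨅ t : ℕ, h (xs t)) = h (xs T) := by
    intro xs
    have hfin : (Set.range fun t => h (xs t)).Finite :=
      (Set.finite_range h).subset (by rintro _ ⟨t, rfl⟩; exact ⟨xs t, rfl⟩)
    have hmem := (Set.range_nonempty (fun t => h (xs t))).csInf_mem hfin
    obtain ⟨T, hT⟩ := hmem
    exact ⟨T, by rw [iInf]; exact hT.symm⟩
  -- closed-loop trajectories of compatible deterministic policies are compatible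
  have key : ∀ (π : X → U) (μ : X → A), (∀ y, π y ∈ Pol y) → (∀ y, μ y ∈ Adv y) →
      Qh f h π μ (x, u, a) ∈ S := by
    intro π μ hπ hμ
    refine ⟨fun t => (((stepFn f π μ)^[t]) (x, u, a)).1,
      fun t => (((stepFn f π μ)^[t]) (x, u, a)).2.1,
      fun t => (((stepFn f π μ)^[t]) (x, u, a)).2.2,
      rfl, rfl, rfl, ?_, ?_, ?_, rfl⟩
    · intro t; simp [Function.iterate_succ_apply', stepFn]
    · intro t; simp only [Function.iterate_succ_apply', stepFn]; exact hπ _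
    · intro t; simp only [Function.iterate_succ_apply', stepFn]; exact hμ _
  have hS_sub : S ⊆ Set.range h := by
    rintro v ⟨xs, us, as, _, _, _, _, _, _, rfl⟩
    obtain ⟨T, hT⟩ := hattain xs
    exact ⟨xs T, hT.symm⟩
  have hS_ne : S.Nonempty :=
    ⟨_, key (fun y => (hPol y).choose) (fun y => (hAdv y).choose)
      (fun y => (hPol y).choose_spec) (fun y => (hAdv y).choose_spec)⟩
  have hS_fin : S.Finite := (Set.finite_range h).subset hS_sub
  have hS_bdd : BddBelow S := hS_fin.bddBelow
  -- the infimum is attained by a compatible sequence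
  obtain ⟨xs, us, as, hx0, hu0, ha0, hdyn, hus, has, hval⟩ := hS_ne.csInf_mem hS_fin
  -- the infimum along this sequence is attained at time T
  obtain ⟨T, hT⟩ := hattain xs
  have hTmin : ∀ t, h (xs T) ≤ h (xs t) := by
    intro t
    rw [← hT]
    exact ciInf_le (hbdd xs) t
  -- last occurrence index
  set L : X → ℕ := fun y => Nat.findGreatest (fun s => xs s = y) T with hLdef
  have hLspec : ∀ y, L y ≠ 0 → xs (L y) = y := by
    intro y hy
    exact Nat.findGreatest_of_ne_zero rfl hy
  set π : X → U := fun y => if 1 ≤ L y then us (L y) else (hPol y).choose with hπdef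
  set μ : X → A := fun y => if 1 ≤ L y then as (L y) else (hAdv y).choose with hμdef
  have hπ : ∀ y, π y ∈ Pol y := by
    intro y
    by_cases hy : 1 ≤ L y
    · have hxsy : xs (L y) = y := hLspec y (by omega)
      have := hus (L y - 1)
      have hsub : L y - 1 + 1 = L y := by omega
      rw [hsub, hxsy] at this
      simpa [hπdef, hy] using this
    · simpa [hπdef, hy] using (hPol y).choose_spec
  have hμ : ∀ y, μ y ∈ Adv y := by
    intro y
    by_cases hy : 1 ≤ L y
    · have hxsy : xs (L y) = y := hLspec y (by omega)
      have := has (L y - 1)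
      have hsub : L y - 1 + 1 = L y := by omega
      rw [hsub, hxsy] at this
      simpa [hμdef, hy] using this
    · simpa [hμdef, hy] using (hAdv y).choose_spec
  set traj : ℕ → X × U × A := fun j => ((stepFn f π μ)^[j]) (x, u, a) with htrajdef
  have hstep1 : ∀ j, (traj (j + 1)).1 = f (traj j).1 (traj j).2.1 (traj j).2.2 := by
    intro j; simp [htrajdef, Function.iterate_succ_apply', stepFn]
  have hact : ∀ j, (traj (j + 1)).2.1 = π ((traj (j + 1)).1) ∧
      (traj (j + 1)).2.2 = μ ((traj (j + 1)).1) := by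
    intro j; constructor <;> simp [htrajdef, Function.iterate_succ_apply', stepFn]
  -- the closed-loop trajectory visits xs T
  have hvisit : ∃ j, (traj j).1 = xs T := by
    rcases Nat.eq_zero_or_pos T with hT0 | hT1
    · exact ⟨0, by simp [htrajdef, hT0, hx0.symm]⟩
    · have main : ∀ n, 1 ≤ n → n ≤ T →
          ∃ j t, 1 ≤ j ∧ n ≤ t ∧ t ≤ T ∧ (traj j).1 = xs t ∧ L (xs t) = t := by
        intro n
        induction n with
        | zero => omega
        | succ n ih =>
          intro _ hnT
          rcases Nat.eq_zero_or_pos n with hn0 | hn1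
          · -- base case n + 1 = 1
            subst hn0
            refine ⟨1, L (xs 1), le_refl 1, ?_, Nat.findGreatest_le T, ?_, ?_⟩
            · exact Nat.le_findGreatest (P := fun s => xs s = xs 1) (by omega : 1 ≤ T) rfl
            · have h1 : (traj 1).1 = f x u a := by
                have := hstep1 0
                simpa [htrajdef] using this
              have h2 : xs 1 = f x u a := by
                rw [hdyn 0, hx0, hu0, ha0]
              have h3 : xs (L (xs 1)) = xs 1 :=
                hLspec (xs 1) (by have h1 : 1 ≤ L (xs 1) := Nat.le_findGreatest (P := fun s => xs s = xs 1) (by omega : 1 ≤ T) rfl; omega)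
              rw [h1, h3, h2]
            · have h3 : xs (L (xs 1)) = xs 1 :=
                hLspec (xs 1) (by have h1 : 1 ≤ L (xs 1) := Nat.le_findGreatest (P := fun s => xs s = xs 1) (by omega : 1 ≤ T) rfl; omega)
              rw [h3]
          · obtain ⟨j, t, hj, hnt, htT, htraj, hLt⟩ := ih hn1 (by omega)
            rcases Nat.lt_or_ge t (n + 1) with hlt | hge
            · -- t = n < T, advance one step
              have htn : t = n := by omega
              have htT' : t + 1 ≤ T := by omega
              have hju : (traj j).2.1 = us t := by
                obtain ⟨j', rfl⟩ : ∃ j', j = j' + 1 := ⟨j - 1, by omega⟩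
                rw [(hact j').1, htraj]
                simp only [hπdef]
                rw [if_pos (by omega : 1 ≤ L (xs t)), hLt]
              have hja : (traj j).2.2 = as t := by
                obtain ⟨j', rfl⟩ : ∃ j', j = j' + 1 := ⟨j - 1, by omega⟩
                rw [(hact j').2, htraj]
                simp only [hμdef]
                rw [if_pos (by omega : 1 ≤ L (xs t)), hLt]
              have hnext : (traj (j + 1)).1 = xs (t + 1) := by
                rw [hstep1 j, htraj, hju, hja, ← hdyn t]
              have hL1 : t + 1 ≤ L (xs (t + 1)) := Nat.le_findGreatest (P := fun s => xs s = xs (t + 1)) htT' rfl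
              have hxsL : xs (L (xs (t + 1))) = xs (t + 1) :=
                hLspec (xs (t + 1)) (by omega)
              refine ⟨j + 1, L (xs (t + 1)), by omega, by omega, Nat.findGreatest_le T,
                ?_, ?_⟩
              · rw [hnext, hxsL]
              · rw [hxsL]
            · exact ⟨j, t, hj, hge, htT, htraj, hLt⟩
      obtain ⟨j, t, _, hnt, htT, htraj, _⟩ := main T hT1 le_rfl
      have : t = T := by omega
      exact ⟨j, by rw [htraj, this]⟩
  -- conclude
  refine ⟨π, μ, hπ, hμ, ?_⟩
  rw [hW]
  refine le_antisymm (csInf_le hS_bdd (key π μ hπ hμ)) ?_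
  obtain ⟨j, hj⟩ := hvisit
  have hle : Qh f h π μ (x, u, a) ≤ h (xs T) := by
    have : Qh f h π μ (x, u, a) ≤ h ((traj j).1) := ciInf_le (hbdd fun t => (traj t).1) j
    rwa [hj] at this
  calc Qh f h π μ (x, u, a) ≤ h (xs T) := hle
    _ = ⨅ t : ℕ, h (xs t) := hT.symm
    _ = sInf S := hval.symm
end

section
/- For every deterministic protagonist policy π and every (x,u,a) ∈ X × U × A, the safety value of π satisfies the self-consistency condition Q_h^{π}(x,u,a) = min{ h(x), min_{a' ∈ A} Q_h^{π}(x', π(x'), a') }, where x' = f x u a. -/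
set_option linter.unusedSectionVars false


/-- Safety value `Q_h^{π}(x,u,a)` of a deterministic protagonist policy: the minimum
over all deterministic adversary policies `μ` of `Q_h^{π,μ}(x,u,a)`. -/
noncomputable def Qhpi {X U A : Type*} (f : X → U → A → X) (h : X → ℝ)
    (π : X → U) (p : X × U × A) : ℝ :=
  ⨅ μ : X → A, Qh f h π μ p

section Aux

variable {X U A : Type*} [Fintype X] [Nonempty X] [Fintype U] [Nonempty U]
  [Fintype A] [Nonempty A]

/-- Closed-loop state dynamics. -/
def gloop (f : X → U → A → X) (π : X → U) (μ : X → A) (y : X) : X :=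
  f y (π y) (μ y)

/-- One-step state reachability under `π` with a free adversary action. -/
def reach (f : X → U → A → X) (π : X → U) (s y : X) : Prop :=
  ∃ a', y = f s (π s) a'

variable (f : X → U → A → X) (h : X → ℝ) (π : X → U)

lemma exists_lb : ∃ c : ℝ, ∀ y : X, c ≤ h y := by
  obtain ⟨x0, hx0⟩ := Finite.exists_min h
  exact ⟨h x0, hx0⟩

lemma bdd_traj {c : ℝ} (hc : ∀ y : X, c ≤ h y) (μ : X → A) (p : X × U × A) :
    BddBelow (Set.range fun t : ℕ => h (((stepFn f π μ)^[t] p).1)) := by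
  refine ⟨c, ?_⟩
  rintro r ⟨t, rfl⟩
  exact hc _

lemma Qh_le_traj {c : ℝ} (hc : ∀ y : X, c ≤ h y) (μ : X → A) (p : X × U × A) (t : ℕ) :
    Qh f h π μ p ≤ h (((stepFn f π μ)^[t] p).1) :=
  ciInf_le (bdd_traj f h π hc μ p) t

lemma lb_Qh {c : ℝ} (hc : ∀ y : X, c ≤ h y) (μ : X → A) (p : X × U × A) :
    c ≤ Qh f h π μ p :=
  le_ciInf fun _ => hc _

lemma Qhpi_le_Qh {c : ℝ} (hc : ∀ y : X, c ≤ h y) (μ : X → A) (p : X × U × A) :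
    Qhpi f h π p ≤ Qh f h π μ p := by
  refine ciInf_le ⟨c, ?_⟩ μ
  rintro r ⟨ν, rfl⟩
  exact lb_Qh f h π hc ν p

lemma lb_Qhpi {c : ℝ} (hc : ∀ y : X, c ≤ h y) (p : X × U × A) :
    c ≤ Qhpi f h π p :=
  le_ciInf fun μ => lb_Qh f h π hc μ p

/-- One-step recursion for `Qh`. -/
lemma Qh_rec {c : ℝ} (hc : ∀ y : X, c ≤ h y) (μ : X → A) (p : X × U × A) :
    Qh f h π μ p = min (h p.1) (Qh f h π μ (stepFn f π μ p)) := by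
  apply le_antisymm
  · refine le_min ?_ ?_
    · exact Qh_le_traj f h π hc μ p 0
    · refine le_ciInf fun t => ?_
      have := Qh_le_traj f h π hc μ p (t + 1)
      rwa [Function.iterate_succ_apply] at this
  · refine le_ciInf fun t => ?_
    cases t with
    | zero => exact min_le_left _ _
    | succ t =>
      refine le_trans (min_le_right _ _) ?_
      have := Qh_le_traj f h π hc μ (stepFn f π μ p) t
      rwa [← Function.iterate_succ_apply] at this

lemma iter_closed (μ : X → A) : ∀ (t : ℕ) (y : X),
    (stepFn f π μ)^[t] (y, π y, μ y) =
      ((gloop f π μ)^[t] y, π ((gloop f π μ)^[t] y), μ ((gloop f π μ)^[t] y)) := by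
  intro t
  induction t with
  | zero => intro y; rfl
  | succ t ih =>
    intro y
    rw [Function.iterate_succ_apply, Function.iterate_succ_apply]
    have hs : stepFn f π μ (y, π y, μ y) = (gloop f π μ y, π (gloop f π μ y), μ (gloop f π μ y)) := rfl
    rw [hs, ih]

lemma state_from (μ : X → A) (p : X × U × A) (t : ℕ) :
    ((stepFn f π μ)^[t + 1] p).1 = (gloop f π μ)^[t] (f p.1 p.2.1 p.2.2) := by
  rw [Function.iterate_succ_apply]
  have hs : stepFn f π μ p =
      (f p.1 p.2.1 p.2.2, π (f p.1 p.2.1 p.2.2), μ (f p.1 p.2.1 p.2.2)) := rfl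
  rw [hs, iter_closed]

lemma Qh_attained (μ : X → A) (p : X × U × A) :
    ∃ t : ℕ, h (((stepFn f π μ)^[t] p).1) = Qh f h π μ p := by
  set F : ℕ → ℝ := fun t => h (((stepFn f π μ)^[t] p).1) with hF
  have hfin : (Set.range F).Finite := by
    have : Set.range F ⊆ h '' Set.univ := by
      rintro r ⟨t, rfl⟩
      exact ⟨_, Set.mem_univ _, rfl⟩
    exact (Set.finite_univ.image h).subset this
  have hne : (Set.range F).Nonempty := ⟨F 0, 0, rfl⟩
  have hmem : sInf (Set.range F) ∈ Set.range F := hne.csInf_mem hfin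
  obtain ⟨t, ht⟩ := hmem
  exact ⟨t, ht⟩

lemma ciInf_attained {ι : Type*} [Finite ι] [Nonempty ι] (F : ι → ℝ) :
    ∃ i, (⨅ j, F j) = F i := by
  obtain ⟨i, hi⟩ := Finite.exists_min F
  refine ⟨i, le_antisymm (ciInf_le (Set.Finite.bddBelow (Set.finite_range F)) i) (le_ciInf hi)⟩

/-- Key combinatorial lemma: any state reachable under `π` with arbitrary adversary
actions is visited by some stationary adversary policy. -/
lemma exists_stationary_of_reach {s y : X}
    (hr : Relation.ReflTransGen (reach f π) s y) :
    ∃ (μ : X → A) (n : ℕ), (gloop f π μ)^[n] s = y := by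
  classical
  -- extract a path
  have hP : ∃ m : ℕ, ∃ z : ℕ → X, z 0 = s ∧ z m = y ∧
      ∀ k < m, reach f π (z k) (z (k + 1)) := by
    induction hr with
    | refl => exact ⟨0, fun _ => s, rfl, rfl, by omega⟩
    | @tail b c hab hbc ih =>
      obtain ⟨m, z, hz0, hzm, hchain⟩ := ih
      refine ⟨m + 1, fun k => if k ≤ m then z k else c, by simp [hz0], by simp, ?_⟩
      intro k hk
      rcases Nat.lt_or_ge k m with hkm | hkm
      · simp only [if_pos (le_of_lt hkm), if_pos (Nat.succ_le_of_lt hkm)]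
        exact hchain k hkm
      · have hkeq : k = m := by omega
        subst hkeq
        simp only [if_pos (le_refl k), if_neg (by omega : ¬ k + 1 ≤ k)]
        rw [hzm]; exact hbc
  set P : ℕ → Prop := fun m => ∃ z : ℕ → X, z 0 = s ∧ z m = y ∧
      ∀ k < m, reach f π (z k) (z (k + 1)) with hPdef
  have hPx : ∃ m, P m := hP
  set m := Nat.find hPx with hm
  obtain ⟨z, hz0, hzm, hchain⟩ : P m := Nat.find_spec hPx
  -- minimality gives injectivity on [0, m]
  have hinj : ∀ i j, i ≤ m → j ≤ m → z i = z j → i = j := by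
    intro i j him hjm hij
    by_contra hne
    -- wlog i < j
    wlog hlt : i < j generalizing i j
    · exact this j i hjm him hij.symm (Ne.symm hne) (by omega)
    have hshort : P (m - (j - i)) := by
      refine ⟨fun k => if k < i then z k else z (k + (j - i)), ?_, ?_, ?_⟩
      · rcases Nat.eq_zero_or_pos i with h0 | h0
        · subst h0
          simp only [if_neg (lt_irrefl 0), Nat.zero_add]
          rw [Nat.sub_zero, ← hij, hz0]
        · simpa [h0] using hz0
      · have hge : ¬ (m - (j - i) < i) := by omega
        simp only [if_neg hge]
        have : m - (j - i) + (j - i) = m := by omega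
        rw [this, hzm]
      · intro k hk
        rcases Nat.lt_or_ge k i with hki | hki
        · simp only [if_pos hki]
          rcases Nat.lt_or_ge (k + 1) i with hk1 | hk1
          · simp only [if_pos hk1]
            exact hchain k (by omega)
          · have hk1i : k + 1 = i := by omega
            simp only [if_neg (by omega : ¬ k + 1 < i)]
            have : k + 1 + (j - i) = j := by omega
            rw [this, ← hij, ← hk1i]
            exact hchain k (by omega)
        · simp only [if_neg (by omega : ¬ k < i), if_neg (by omega : ¬ k + 1 < i)]
          have : k + 1 + (j - i) = (k + (j - i)) + 1 := by omega
          rw [this]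
          exact hchain (k + (j - i)) (by omega)
    have := Nat.find_min hPx (by omega : m - (j - i) < m) 
    exact this hshort
  -- actions along the path
  have hact : ∀ k, k < m → ∃ a', z (k + 1) = f (z k) (π (z k)) a' := fun k hk => hchain k hk
  set act : ℕ → A := fun k =>
    if hk : k < m then Classical.choose (hact k hk) else Classical.arbitrary A with hactdef
  have haction : ∀ k, k < m → z (k + 1) = f (z k) (π (z k)) (act k) := by
    intro k hk
    rw [hactdef]
    simp only [dif_pos hk]
    exact Classical.choose_spec (hact k hk)
  set μ : X → A := fun v =>
    if hv : ∃ k, k < m ∧ z k = v then act (Classical.choose hv)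
    else Classical.arbitrary A with hμ
  refine ⟨μ, m, ?_⟩
  have key : ∀ k, k ≤ m → (gloop f π μ)^[k] s = z k := by
    intro k
    induction k with
    | zero => intro _; simpa using hz0.symm
    | succ k ih =>
      intro hk
      rw [Function.iterate_succ_apply', ih (by omega)]
      have hv : ∃ k', k' < m ∧ z k' = z k := ⟨k, by omega, rfl⟩
      have hk' := Classical.choose_spec hv
      have hkk : Classical.choose hv = k := hinj _ _ (by omega) (by omega) hk'.2
      show f (z k) (π (z k)) (μ (z k)) = z (k + 1)
      have : μ (z k) = act k := by
        rw [hμ]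
        simp only [dif_pos hv]
        rw [hkk]
      rw [this]
      exact (haction k (by omega)).symm
  rw [key m (le_refl m), hzm]

lemma reach_traj (μ₀ : X → A) (x' : X) (a'₀ : A) (t : ℕ) :
    Relation.ReflTransGen (reach f π) x' (((stepFn f π μ₀)^[t] (x', π x', a'₀)).1) := by
  cases t with
  | zero => exact Relation.ReflTransGen.refl
  | succ t =>
    rw [state_from]
    simp only
    induction t with
    | zero => exact Relation.ReflTransGen.single ⟨a'₀, rfl⟩
    | succ t ih =>
      rw [Function.iterate_succ_apply']
      exact ih.tail ⟨μ₀ _, rfl⟩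

end Aux

/-- Self-consistency condition for `Q_h^{π}`. -/
theorem safety_self_consistency_policy {X U A : Type*}
    [Fintype X] [Nonempty X] [Fintype U] [Nonempty U] [Fintype A] [Nonempty A]
    (f : X → U → A → X) (h : X → ℝ) (π : X → U) (x : X) (u : U) (a : A) :
    Qhpi f h π (x, u, a) =
      min (h x) (⨅ a' : A, Qhpi f h π (f x u a, π (f x u a), a')) := by
  classical
  obtain ⟨c, hc⟩ := exists_lb h
  set x' : X := f x u a with hx'
  apply le_antisymm
  · -- Qhpi ≤ min
    refine le_min ?_ ?_
    · -- ≤ h x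
      refine le_trans (Qhpi_le_Qh f h π hc (fun _ => Classical.arbitrary A) _) ?_
      exact Qh_le_traj f h π hc _ _ 0
    · -- ≤ ⨅ a', Qhpi (x', π x', a')
      obtain ⟨a'₀, ha'₀⟩ := ciInf_attained (fun a' : A => Qhpi f h π (x', π x', a'))
      rw [ha'₀]
      obtain ⟨μ₀, hμ₀⟩ := ciInf_attained (fun μ : X → A => Qh f h π μ (x', π x', a'₀))
      have hQ : Qhpi f h π (x', π x', a'₀) = Qh f h π μ₀ (x', π x', a'₀) := hμ₀
      rw [hQ]
      obtain ⟨T, hT⟩ := Qh_attained f h π μ₀ (x', π x', a'₀)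
      rw [← hT]
      obtain ⟨μ, n, hn⟩ := exists_stationary_of_reach f π (reach_traj f π μ₀ x' a'₀ T)
      refine le_trans (Qhpi_le_Qh f h π hc μ _) ?_
      have := Qh_le_traj f h π hc μ (x, u, a) (n + 1)
      rw [state_from] at this
      simp only at this
      rw [← hx'] at this
      rwa [hn] at this
  · -- min ≤ Qhpi
    refine le_ciInf fun μ => ?_
    rw [Qh_rec f h π hc μ (x, u, a)]
    refine min_le_min (le_refl _) ?_
    have hstep : stepFn f π μ (x, u, a) = (x', π x', μ x') := rfl
    rw [hstep]
    refine le_trans (ciInf_le ?_ (μ x')) (Qhpi_le_Qh f h π hc μ _)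
    refine ⟨c, ?_⟩
    rintro r ⟨a', rfl⟩
    exact lb_Qhpi f h π hc _
end

section
/- For every (x,u,a) ∈ X × U × A, the optimal safety value satisfies the self-consistency condition Q_h^{*}(x,u,a) = min{ h(x), max_{u' ∈ U} min_{a' ∈ A} Q_h^{*}(x', u', a') }, where x' = f x u a. -/
/-- Optimal safety value `Q_h^{*}(x,u,a)`: the maximum over all deterministic
protagonist policies `π` of `Q_h^{π}(x,u,a)`. -/
noncomputable def Qhstar {X U A : Type*} (f : X → U → A → X) (h : X → ℝ)
    (p : X × U × A) : ℝ :=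
  ⨆ π : X → U, Qhpi f h π p

section Aux
set_option linter.unusedSectionVars false

open Function

variable {X U A : Type*}
  [Fintype X] [Nonempty X] [Fintype U] [Nonempty U] [Fintype A] [Nonempty A]
  (f : X → U → A → X) (h : X → ℝ)

/-- The closed-loop state dynamics. -/
def gFn (π : X → U) (μ : X → A) (z : X) : X := f z (π z) (μ z)

/-- The state-based safety value of a pair of policies. -/
noncomputable def VFn (π : X → U) (μ : X → A) (z : X) : ℝ :=
  ⨅ t : ℕ, h ((gFn f π μ)^[t] z)

/-- The state-based safety value of a protagonist policy. -/
noncomputable def VloFn (π : X → U) (z : X) : ℝ := ⨅ μ : X → A, VFn f h π μ z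

/-- The state-based optimal safety value. -/
noncomputable def WFn (z : X) : ℝ := ⨆ π : X → U, VloFn f h π z

private lemma bdd_h {ι : Type*} (k : ι → X) :
    BddBelow (Set.range fun i => h (k i)) :=
  ((Set.finite_range h).bddBelow).mono (by rintro _ ⟨i, rfl⟩; exact ⟨_, rfl⟩)

private lemma iInf_nat_eq_min (G : ℕ → ℝ) (hb : BddBelow (Set.range G)) :
    ⨅ t, G t = min (G 0) (⨅ t, G (t + 1)) := by
  have hb' : BddBelow (Set.range fun t => G (t + 1)) :=
    hb.mono (by rintro _ ⟨t, rfl⟩; exact ⟨_, rfl⟩)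
  apply le_antisymm
  · exact le_min (ciInf_le hb 0) (le_ciInf fun t => ciInf_le hb (t + 1))
  · refine le_ciInf fun t => ?_
    cases t with
    | zero => exact min_le_left _ _
    | succ n => exact (min_le_right _ _).trans (ciInf_le hb' n)

private lemma ciInf_min {ι : Type*} [Nonempty ι] [Finite ι] (c : ℝ) (F : ι → ℝ) :
    ⨅ i, min c (F i) = min c (⨅ i, F i) := by
  have hb : BddBelow (Set.range F) := (Set.finite_range F).bddBelow
  have hb2 : BddBelow (Set.range fun i => min c (F i)) := (Set.finite_range _).bddBelow
  apply le_antisymm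
  · obtain ⟨i₀⟩ := ‹Nonempty ι›
    exact le_min ((ciInf_le hb2 i₀).trans (min_le_left _ _))
      (le_ciInf fun i => (ciInf_le hb2 i).trans (min_le_right _ _))
  · exact le_ciInf fun i => min_le_min le_rfl (ciInf_le hb i)

private lemma ciSup_min {ι : Type*} [Nonempty ι] [Finite ι] (c : ℝ) (F : ι → ℝ) :
    ⨆ i, min c (F i) = min c (⨆ i, F i) := by
  have hb : BddAbove (Set.range F) := (Set.finite_range F).bddAbove
  have hb2 : BddAbove (Set.range fun i => min c (F i)) := (Set.finite_range _).bddAbove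
  apply le_antisymm
  · exact ciSup_le fun i => min_le_min le_rfl (le_ciSup hb i)
  · obtain ⟨i₀, hmax⟩ := Finite.exists_max F
    calc min c (⨆ i, F i) ≤ min c (F i₀) := min_le_min le_rfl (ciSup_le hmax)
      _ ≤ ⨆ i, min c (F i) := le_ciSup hb2 i₀

private lemma VFn_le (π : X → U) (μ : X → A) (z : X) : VFn f h π μ z ≤ h z := by
  have := ciInf_le (bdd_h h fun t => (gFn f π μ)^[t] z) 0
  simpa [VFn] using this

private lemma Vlo_le_VFn (π : X → U) (μ : X → A) (z : X) :
    VloFn f h π z ≤ VFn f h π μ z :=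
  ciInf_le ((Set.finite_range _).bddBelow) μ

private lemma Vlo_le_h (π : X → U) (z : X) : VloFn f h π z ≤ h z :=
  (Vlo_le_VFn f h π (Classical.arbitrary _) z).trans (VFn_le f h _ _ z)

private lemma Vlo_le_W (π : X → U) (z : X) : VloFn f h π z ≤ WFn f h z :=
  le_ciSup (f := fun π : X → U => VloFn f h π z)
    ((Set.finite_range _).bddAbove) π

private lemma W_le_h (z : X) : WFn f h z ≤ h z :=
  ciSup_le fun π => Vlo_le_h f h π z

/-- Key adversary-exchange lemma: the adversary value at `y` is at most the
value of any `(a', μ')`-continuation after the protagonist's own move at `y`. -/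
private lemma lemA (π : X → U) (y : X) (a' : A) (μ' : X → A) :
    VloFn f h π y ≤ VFn f h π μ' (f y (π y) a') := by
  classical
  set μ : X → A := Function.update μ' y a' with hμ
  set z : X := f y (π y) a' with hz
  have claim : ∀ t, (∃ s, (gFn f π μ)^[s] y = (gFn f π μ')^[t] z) ∨
      (∃ s, (gFn f π μ')^[s] y = (gFn f π μ')^[t] z) := by
    intro t
    induction t with
    | zero =>
      left; exact ⟨1, by simp [gFn, hμ, Function.update_self, hz]⟩
    | succ n ih =>
      rcases ih with ⟨s, hs⟩ | ⟨s, hs⟩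
      · by_cases hy : (gFn f π μ')^[n] z = y
        · right
          refine ⟨1, ?_⟩
          conv_rhs => rw [iterate_succ_apply']
          rw [hy, iterate_one]
        · left
          refine ⟨s + 1, ?_⟩
          rw [iterate_succ_apply', iterate_succ_apply', hs]
          simp [gFn, hμ, Function.update_of_ne hy]
      · right
        exact ⟨s + 1, by rw [iterate_succ_apply', iterate_succ_apply', hs]⟩
  refine le_ciInf fun t => ?_
  rcases claim t with ⟨s, hs⟩ | ⟨s, hs⟩
  · calc VloFn f h π y ≤ VFn f h π μ y := Vlo_le_VFn f h π μ y
      _ ≤ h ((gFn f π μ)^[s] y) := ciInf_le (bdd_h h _) s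
      _ = h ((gFn f π μ')^[t] z) := by rw [hs]
  · calc VloFn f h π y ≤ VFn f h π μ' y := Vlo_le_VFn f h π μ' y
      _ ≤ h ((gFn f π μ')^[s] y) := ciInf_le (bdd_h h _) s
      _ = h ((gFn f π μ')^[t] z) := by rw [hs]

private lemma Vlo_le_Vlo_next (π : X → U) (y : X) (a' : A) :
    VloFn f h π y ≤ VloFn f h π (f y (π y) a') :=
  le_ciInf fun μ' => lemA f h π y a' μ'

/-- Existence of a locally improving protagonist action. -/
private lemma lemB (z : X) : ∃ u : U, ∀ a : A, WFn f h z ≤ WFn f h (f z u a) := by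
  obtain ⟨π, hmax⟩ := Finite.exists_max (fun π : X → U => VloFn f h π z)
  refine ⟨π z, fun a => ?_⟩
  calc WFn f h z ≤ VloFn f h π z := ciSup_le hmax
    _ ≤ VloFn f h π (f z (π z) a) := Vlo_le_Vlo_next f h π z a
    _ ≤ WFn f h (f z (π z) a) := Vlo_le_W f h π _

private lemma W_bellman_ge (y : X) (u' : U) :
    min (h y) (⨅ a' : A, WFn f h (f y u' a')) ≤ WFn f h y := by
  classical
  choose pstar hpstar using fun w => lemB f h w
  set c : ℝ := ⨅ a' : A, WFn f h (f y u' a') with hc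
  set π : X → U := fun w => if w = y then u' else pstar w with hπ
  have key : ∀ μ : X → A, ∀ t, (gFn f π μ)^[t] y = y ∨
      c ≤ WFn f h ((gFn f π μ)^[t] y) := by
    intro μ t
    induction t with
    | zero => left; rfl
    | succ n ih =>
      rw [iterate_succ_apply']
      by_cases hy : (gFn f π μ)^[n] y = y
      · right
        rw [hy]
        have e : gFn f π μ y = f y u' (μ y) := by simp [gFn, hπ]
        rw [e]
        exact ciInf_le ((Set.finite_range _).bddBelow) (μ y)
      · rcases ih with hw | hw
        · exact absurd hw hy
        · right
          have e : gFn f π μ ((gFn f π μ)^[n] y)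
              = f ((gFn f π μ)^[n] y) (pstar ((gFn f π μ)^[n] y)) (μ ((gFn f π μ)^[n] y)) := by
            have hy' : ¬ (gFn f (fun w => if w = y then u' else pstar w) μ)^[n] y = y := hy
            simp [gFn, hπ, hy']
          rw [e]
          exact hw.trans (hpstar _ _)
  refine le_trans ?_ (Vlo_le_W f h π y)
  simp only [VloFn, VFn]
  refine le_ciInf fun μ => le_ciInf fun t => ?_
  rcases key μ t with hw | hw
  · rw [hw]; exact min_le_left _ _
  · exact (min_le_right _ _).trans (hw.trans (W_le_h f h _))

private lemma W_bellman (y : X) :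
    WFn f h y = min (h y) (⨆ u' : U, ⨅ a' : A, WFn f h (f y u' a')) := by
  apply le_antisymm
  · refine ciSup_le fun π => le_min (Vlo_le_h f h π y) ?_
    calc VloFn f h π y ≤ ⨅ a' : A, WFn f h (f y (π y) a') :=
          le_ciInf fun a' => (Vlo_le_Vlo_next f h π y a').trans (Vlo_le_W f h π _)
      _ ≤ ⨆ u' : U, ⨅ a' : A, WFn f h (f y u' a') :=
          le_ciSup (f := fun u' : U => ⨅ a' : A, WFn f h (f y u' a'))
            ((Set.finite_range _).bddAbove) (π y)
  · rw [← ciSup_min]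
    exact ciSup_le fun u' => W_bellman_ge f h y u'

private lemma Qh_eq (π : X → U) (μ : X → A) (x : X) (u : U) (a : A) :
    Qh f h π μ (x, u, a) = min (h x) (VFn f h π μ (f x u a)) := by
  have step1 : ∀ t : ℕ, (stepFn f π μ)^[t] (stepFn f π μ (x, u, a)) =
      ((gFn f π μ)^[t] (f x u a), π ((gFn f π μ)^[t] (f x u a)),
        μ ((gFn f π μ)^[t] (f x u a))) := by
    intro t
    induction t with
    | zero => rfl
    | succ n ih => rw [iterate_succ_apply', iterate_succ_apply', ih]; rfl
  rw [Qh, iInf_nat_eq_min _ (bdd_h h _)]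
  congr 1
  rw [VFn]
  exact congrArg iInf (funext fun t => by rw [iterate_succ_apply, step1 t])

private lemma Qhpi_eq (π : X → U) (x : X) (u : U) (a : A) :
    Qhpi f h π (x, u, a) = min (h x) (VloFn f h π (f x u a)) := by
  rw [Qhpi, VloFn]
  rw [← ciInf_min]
  exact congrArg iInf (funext fun μ => Qh_eq f h π μ x u a)

private lemma Qhstar_eq (x : X) (u : U) (a : A) :
    Qhstar f h (x, u, a) = min (h x) (WFn f h (f x u a)) := by
  rw [Qhstar, WFn]
  rw [← ciSup_min]
  exact congrArg iSup (funext fun π => Qhpi_eq f h π x u a)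

end Aux

/-- Self-consistency condition for the optimal safety value `Q_h^{*}`. -/
theorem safety_self_consistency_optimal {X U A : Type*}
    [Fintype X] [Nonempty X] [Fintype U] [Nonempty U] [Fintype A] [Nonempty A]
    (f : X → U → A → X) (h : X → ℝ) (x : X) (u : U) (a : A) :
    Qhstar f h (x, u, a) =
      min (h x) (⨆ u' : U, ⨅ a' : A, Qhstar f h (f x u a, u', a')) := by
  have key : (⨆ u' : U, ⨅ a' : A, Qhstar f h (f x u a, u', a'))
      = min (h (f x u a)) (⨆ u' : U, ⨅ a' : A, WFn f h (f (f x u a) u' a')) := by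
    have e1 : ∀ u' : U, (⨅ a' : A, Qhstar f h (f x u a, u', a'))
        = min (h (f x u a)) (⨅ a' : A, WFn f h (f (f x u a) u' a')) := by
      intro u'
      rw [← ciInf_min]
      exact congrArg iInf (funext fun a' => Qhstar_eq f h (f x u a) u' a')
    calc (⨆ u' : U, ⨅ a' : A, Qhstar f h (f x u a, u', a'))
        = ⨆ u' : U, min (h (f x u a)) (⨅ a' : A, WFn f h (f (f x u a) u' a')) :=
          congrArg iSup (funext e1)
      _ = min (h (f x u a)) (⨆ u' : U, ⨅ a' : A, WFn f h (f (f x u a) u' a')) :=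
          ciSup_min _ _
  rw [Qhstar_eq, key, ← W_bellman]
end

section
/- For all Q, Q̃ : X × U × A → ℝ, the safety Bellman operator T_h is a γ_h-contraction in the supremum norm: ‖T_h(Q) − T_h(Q̃)‖_∞ ≤ γ_h · ‖Q − Q̃‖_∞. -/
/-- Safety Bellman operator `T_h` with discount factor `γ`:
`(T_h Q)(x,u,a) = (1−γ)·h(x) + γ·min{h(x), max_{u' ∈ U} min_{a' ∈ A} Q(x', u', a')}`
where `x' = f x u a`. -/
noncomputable def Tb {X U A : Type*} (f : X → U → A → X) (h : X → ℝ) (γ : ℝ)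
    (Q : X × U × A → ℝ) (p : X × U × A) : ℝ :=
  (1 - γ) * h p.1 +
    γ * min (h p.1)
      (⨆ u' : U, ⨅ a' : A, Q (f p.1 p.2.1 p.2.2, u', a'))

private lemma ciSup_sub_ciSup_le {ι : Type*} [Fintype ι] [Nonempty ι]
    (g g' : ι → ℝ) (K : ℝ) (hb : ∀ i, g i - g' i ≤ K) :
    (⨆ i, g i) - (⨆ i, g' i) ≤ K := by
  rw [sub_le_iff_le_add]
  refine ciSup_le fun i => ?_
  have := le_ciSup (Set.Finite.bddAbove (Set.finite_range g')) i
  linarith [hb i]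

private lemma ciInf_sub_ciInf_le {ι : Type*} [Fintype ι] [Nonempty ι]
    (g g' : ι → ℝ) (K : ℝ) (hb : ∀ i, g i - g' i ≤ K) :
    (⨅ i, g i) - (⨅ i, g' i) ≤ K := by
  have h2 : (⨅ i, g i) - K ≤ ⨅ i, g' i := le_ciInf fun i => by
    have h1 := ciInf_le (f := g) (Set.Finite.bddBelow (Set.finite_range g)) i
    linarith [hb i]
  linarith

/-- The safety Bellman operator `T_h` is a `γ_h`-contraction in the supremum norm. -/
theorem Tb_contraction {X U A : Type*}
    [Fintype X] [Nonempty X] [Fintype U] [Nonempty U] [Fintype A] [Nonempty A]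
    (f : X → U → A → X) (h : X → ℝ) (γh : ℝ) (hγ : γh ∈ Set.Ioo (0 : ℝ) 1)
    (Q Q' : X × U × A → ℝ) :
    (⨆ p : X × U × A, |Tb f h γh Q p - Tb f h γh Q' p|) ≤
      γh * ⨆ p : X × U × A, |Q p - Q' p| := by
  obtain ⟨hγ0, hγ1⟩ := hγ
  set K : ℝ := ⨆ p : X × U × A, |Q p - Q' p| with hK
  have hKb : ∀ p, |Q p - Q' p| ≤ K :=
    fun p => le_ciSup (f := fun p => |Q p - Q' p|) (Set.Finite.bddAbove (Set.finite_range _)) p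
  refine ciSup_le fun p => ?_
  -- bound the pointwise difference
  set S : ℝ := ⨆ u' : U, ⨅ a' : A, Q (f p.1 p.2.1 p.2.2, u', a') with hS
  set S' : ℝ := ⨆ u' : U, ⨅ a' : A, Q' (f p.1 p.2.1 p.2.2, u', a') with hS'
  have hSS' : |S - S'| ≤ K := by
    rw [abs_sub_le_iff]
    constructor
    · refine ciSup_sub_ciSup_le _ _ K fun u' => ?_
      refine ciInf_sub_ciInf_le _ _ K fun a' => ?_
      exact (le_abs_self _).trans (hKb _)
    · refine ciSup_sub_ciSup_le _ _ K fun u' => ?_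
      refine ciInf_sub_ciInf_le _ _ K fun a' => ?_
      exact (le_abs_self _).trans ((abs_sub_comm _ _).le.trans (hKb _))
  have hmin : |min (h p.1) S - min (h p.1) S'| ≤ |S - S'| := by
    refine (abs_min_sub_min_le_max _ _ _ _).trans ?_
    simp [abs_nonneg]
  have : |Tb f h γh Q p - Tb f h γh Q' p| = γh * |min (h p.1) S - min (h p.1) S'| := by
    simp only [Tb, ← hS, ← hS']
    rw [show (1 - γh) * h p.1 + γh * min (h p.1) S - ((1 - γh) * h p.1 + γh * min (h p.1) S')
        = γh * (min (h p.1) S - min (h p.1) S') by ring,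
      abs_mul, abs_of_pos hγ0]
  rw [this]
  have := hmin.trans hSS'
  nlinarith [hγ0.le]
end

section
/- Each of the operators T_h^{π,μ} (for any deterministic policies π : X → U, μ : X → A), T_h^{π} (for any deterministic policy π : X → U) and T_h has a unique fixed point in the space of functions X × U × A → ℝ; that is, for each of these operators T there exists exactly one Q : X × U × A → ℝ with T(Q) = Q. -/
/-- Safety self-consistency operator `T_h^{π,μ}` of a pair of deterministic policies. -/
noncomputable def Tpm {X U A : Type*} (f : X → U → A → X) (h : X → ℝ) (γ : ℝ)
    (π : X → U) (μ : X → A) (Q : X × U × A → ℝ) (p : X × U × A) : ℝ :=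
  (1 - γ) * h p.1 +
    γ * min (h p.1)
      (Q (f p.1 p.2.1 p.2.2, π (f p.1 p.2.1 p.2.2), μ (f p.1 p.2.1 p.2.2)))

/-- Safety self-consistency operator `T_h^{π}` of a deterministic protagonist policy. -/
noncomputable def Tpi {X U A : Type*} (f : X → U → A → X) (h : X → ℝ) (γ : ℝ)
    (π : X → U) (Q : X × U × A → ℝ) (p : X × U × A) : ℝ :=
  (1 - γ) * h p.1 +
    γ * min (h p.1)
      (⨅ a' : A, Q (f p.1 p.2.1 p.2.2, π (f p.1 p.2.1 p.2.2), a'))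

private lemma abs_ciInf_sub_ciInf {ι : Type*} [Fintype ι] [Nonempty ι]
    (f g : ι → ℝ) {c : ℝ} (hc : ∀ i, |f i - g i| ≤ c) :
    |(⨅ i, f i) - ⨅ i, g i| ≤ c := by
  have key : ∀ (f g : ι → ℝ), (∀ i, |f i - g i| ≤ c) → (⨅ i, f i) - (⨅ i, g i) ≤ c := by
    intro f g hc
    have hb : BddBelow (Set.range f) := (Set.finite_range f).bddBelow
    have : (⨅ i, f i) - c ≤ ⨅ i, g i := by
      refine le_ciInf fun i => ?_
      have h1 := ciInf_le hb i
      have h2 := hc i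
      rw [abs_le] at h2
      linarith
    linarith
  rw [abs_le]
  constructor
  · have := key g f fun i => by rw [abs_sub_comm]; exact hc i
    linarith
  · exact key f g hc

private lemma abs_ciSup_sub_ciSup {ι : Type*} [Fintype ι] [Nonempty ι]
    (f g : ι → ℝ) {c : ℝ} (hc : ∀ i, |f i - g i| ≤ c) :
    |(⨆ i, f i) - ⨆ i, g i| ≤ c := by
  have key : ∀ (f g : ι → ℝ), (∀ i, |f i - g i| ≤ c) → (⨆ i, f i) - (⨆ i, g i) ≤ c := by
    intro f g hc
    have hb : BddAbove (Set.range g) := (Set.finite_range g).bddAbove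
    rw [sub_le_iff_le_add]
    refine ciSup_le fun i => ?_
    calc f i ≤ g i + c := by have := hc i; rw [abs_le] at this; linarith [this.1]
    _ ≤ c + ⨆ i, g i := by have := le_ciSup hb i; linarith
  rw [abs_le]
  constructor
  · have := key g f fun i => by rw [abs_sub_comm]; exact hc i
    linarith
  · exact key f g hc

private lemma exists_unique_fixed {P : Type*} [Fintype P] [Nonempty P]
    (T : (P → ℝ) → (P → ℝ)) {γ : ℝ} (h0 : 0 ≤ γ) (h1 : γ < 1)
    (hT : ∀ Q₁ Q₂ p, |T Q₁ p - T Q₂ p| ≤ γ * dist Q₁ Q₂) :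
    ∃! Q : P → ℝ, T Q = Q := by
  have hC : ContractingWith ⟨γ, h0⟩ T := by
    constructor
    · exact_mod_cast h1
    · refine LipschitzWith.of_dist_le_mul fun Q₁ Q₂ => ?_
      rw [dist_pi_le_iff (by positivity)]
      intro p
      rw [Real.dist_eq]
      exact hT Q₁ Q₂ p
  refine ⟨hC.fixedPoint T, hC.fixedPoint_isFixedPt, fun Q hQ => hC.fixedPoint_unique hQ⟩

private lemma min_step {γ hx b₁ b₂ c : ℝ} (h0 : 0 ≤ γ) (hb : |b₁ - b₂| ≤ c) :
    |((1 - γ) * hx + γ * min hx b₁) - ((1 - γ) * hx + γ * min hx b₂)| ≤ γ * c := by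
  have : ((1 - γ) * hx + γ * min hx b₁) - ((1 - γ) * hx + γ * min hx b₂)
      = γ * (min hx b₁ - min hx b₂) := by ring
  rw [this, abs_mul, abs_of_nonneg h0]
  have h1 : |min hx b₁ - min hx b₂| ≤ max |hx - hx| |b₁ - b₂| := abs_min_sub_min_le_max _ _ _ _
  have h2 : max |hx - hx| |b₁ - b₂| ≤ c := by
    simp only [sub_self, abs_zero]
    exact max_le (le_trans (abs_nonneg _) hb) hb
  exact mul_le_mul_of_nonneg_left (le_trans h1 h2) h0

/-- Each of the safety operators `T_h^{π,μ}`, `T_h^{π}` and `T_h` has a unique fixed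
point in the space of functions `X × U × A → ℝ`. -/
theorem safety_operators_unique_fixed_points {X U A : Type*}
    [Fintype X] [Nonempty X] [Fintype U] [Nonempty U] [Fintype A] [Nonempty A]
    (f : X → U → A → X) (h : X → ℝ) (γh : ℝ) (hγ : γh ∈ Set.Ioo (0 : ℝ) 1) :
    (∀ (π : X → U) (μ : X → A), ∃! Q : X × U × A → ℝ, Tpm f h γh π μ Q = Q) ∧
    (∀ π : X → U, ∃! Q : X × U × A → ℝ, Tpi f h γh π Q = Q) ∧
    (∃! Q : X × U × A → ℝ, Tb f h γh Q = Q) := by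
  obtain ⟨h0, h1⟩ := hγ
  have h0' := le_of_lt h0
  have hpt : ∀ (Q₁ Q₂ : X × U × A → ℝ) (p : X × U × A), |Q₁ p - Q₂ p| ≤ dist Q₁ Q₂ :=
    fun Q₁ Q₂ p => by rw [← Real.dist_eq]; exact dist_le_pi_dist Q₁ Q₂ p
  refine ⟨fun π μ => ?_, fun π => ?_, ?_⟩
  · refine exists_unique_fixed _ h0' h1 fun Q₁ Q₂ p => ?_
    exact min_step h0' (hpt Q₁ Q₂ _)
  · refine exists_unique_fixed _ h0' h1 fun Q₁ Q₂ p => ?_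
    exact min_step h0' (abs_ciInf_sub_ciInf _ _ fun a' => hpt Q₁ Q₂ _)
  · refine exists_unique_fixed _ h0' h1 fun Q₁ Q₂ p => ?_
    exact min_step h0'
      (abs_ciSup_sub_ciSup _ _ fun u' => abs_ciInf_sub_ciInf _ _ fun a' => hpt Q₁ Q₂ _)
end

section
/- Fix a deterministic protagonist policy π and a deterministic adversary policy μ. For each γ ∈ (0,1), let Q_γ denote the unique fixed point of the operator T_h^{π,μ} with discount factor γ. Then for every (x,u,a) ∈ X × U × A, Q_γ(x,u,a) converges to the safety value Q_h^{π,μ}(x,u,a) as γ → 1 from the left. -/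
/-- As `γ → 1⁻`, the fixed point of `T_h^{π,μ}` with discount factor `γ` converges
pointwise to the safety value `Q_h^{π,μ}`. -/
theorem fixed_point_tendsto_safety_value {X U A : Type*}
    [Fintype X] [Nonempty X] [Fintype U] [Nonempty U] [Fintype A] [Nonempty A]
    (f : X → U → A → X) (h : X → ℝ) (π : X → U) (μ : X → A)
    (Qfix : ℝ → (X × U × A → ℝ))
    (hfix : ∀ γ ∈ Set.Ioo (0 : ℝ) 1, Tpm f h γ π μ (Qfix γ) = Qfix γ)
    (x : X) (u : U) (a : A) :
    Filter.Tendsto (fun γ : ℝ => Qfix γ (x, u, a))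
      (nhdsWithin 1 (Set.Ioo (0 : ℝ) 1)) (nhds (Qh f h π μ (x, u, a))) := by
  classical
  set S : X × U × A → X × U × A := stepFn f π μ with hS
  set Q : X × U × A → ℝ := Qh f h π μ with hQ
  -- a uniform bound on |h|
  obtain ⟨B, hB⟩ : ∃ B : ℝ, ∀ y : X, |h y| ≤ B :=
    ⟨Finset.univ.sup' Finset.univ_nonempty (fun y => |h y|),
      fun y => Finset.le_sup' (fun y => |h y|) (Finset.mem_univ y)⟩
  have hB0 : 0 ≤ B := le_trans (abs_nonneg _) (hB (Classical.arbitrary X))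
  -- bounded below orbit values
  have hbdd : ∀ p : X × U × A, BddBelow (Set.range fun t : ℕ => h ((S^[t] p).1)) := by
    intro p
    exact ⟨-B, by rintro r ⟨t, rfl⟩; have := hB ((S^[t] p).1); linarith [abs_le.mp this]⟩
  have hle : ∀ (p : X × U × A) (t : ℕ), Q p ≤ h ((S^[t] p).1) := by
    intro p t
    exact ciInf_le (hbdd p) t
  -- the recursion for Q
  have hrec : ∀ p : X × U × A, Q p = min (h p.1) (Q (S p)) := by
    intro p
    apply le_antisymm
    · apply le_min
      · simpa using hle p 0
      · apply le_ciInf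
        intro t
        have := hle p (t + 1)
        simpa [Function.iterate_succ_apply] using this
    · apply le_ciInf
      intro t
      cases t with
      | zero => simp
      | succ t =>
        have h1 : Q (S p) ≤ h ((S^[t] (S p)).1) := hle (S p) t
        have h2 : min (h p.1) (Q (S p)) ≤ Q (S p) := min_le_right _ _
        rw [Function.iterate_succ_apply]
        exact le_trans h2 h1
  -- the fixed-point equation, pointwise
  have hQfix : ∀ γ ∈ Set.Ioo (0 : ℝ) 1, ∀ p : X × U × A,
      Qfix γ p = (1 - γ) * h p.1 + γ * min (h p.1) (Qfix γ (S p)) := by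
    intro γ hγ p
    have := congrFun (hfix γ hγ) p
    rw [← this]
    rfl
  -- lower bound : Q ≤ Qfix γ
  have hlow : ∀ γ ∈ Set.Ioo (0 : ℝ) 1, ∀ p : X × U × A, Q p ≤ Qfix γ p := by
    intro γ hγ
    obtain ⟨hγ0, hγ1⟩ := hγ
    obtain ⟨p0, -, hp0⟩ := Finset.exists_min_image (Finset.univ : Finset (X × U × A))
      (fun p => Qfix γ p - Q p) ⟨Classical.arbitrary _, Finset.mem_univ _⟩
    have key : 0 ≤ Qfix γ p0 - Q p0 := by
      by_contra hneg
      push_neg at hneg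
      set m := Qfix γ p0 - Q p0 with hm
      have hmS : m ≤ Qfix γ (S p0) - Q (S p0) := hp0 (S p0) (Finset.mem_univ _)
      have h1 : Qfix γ p0 = (1 - γ) * h p0.1 + γ * min (h p0.1) (Qfix γ (S p0)) :=
        hQfix γ ⟨hγ0, hγ1⟩ p0
      have h2 : Q p0 = min (h p0.1) (Q (S p0)) := hrec p0
      -- min (h p0.1) (Qfix γ (S p0)) ≥ min (h p0.1) (Q (S p0)) + m
      have h3 : min (h p0.1) (Q (S p0)) + m ≤ min (h p0.1) (Qfix γ (S p0)) := by
        apply le_min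
        · have : min (h p0.1) (Q (S p0)) ≤ h p0.1 := min_le_left _ _
          linarith
        · have : min (h p0.1) (Q (S p0)) ≤ Q (S p0) := min_le_right _ _
          linarith
      have h4 : Q p0 ≤ h p0.1 := by simpa using hle p0 0
      nlinarith [h3, h4, h1, h2, min_le_left (h p0.1) (Q (S p0))]
    intro p
    have := hp0 p (Finset.mem_univ _)
    linarith
  -- upper bound : Qfix γ p ≤ h (x_t) + 2 t (1-γ) B
  have hup : ∀ γ ∈ Set.Ioo (0 : ℝ) 1, ∀ (t : ℕ) (p : X × U × A),
      Qfix γ p ≤ h ((S^[t] p).1) + 2 * t * (1 - γ) * B := by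
    intro γ hγ t
    obtain ⟨hγ0, hγ1⟩ := hγ
    induction t with
    | zero =>
      intro p
      have h1 := hQfix γ ⟨hγ0, hγ1⟩ p
      have h2 : min (h p.1) (Qfix γ (S p)) ≤ h p.1 := min_le_left _ _
      simp only [Function.iterate_zero, id_eq, Nat.cast_zero]
      nlinarith
    | succ t ih =>
      intro p
      have h1 := hQfix γ ⟨hγ0, hγ1⟩ p
      have h2 : min (h p.1) (Qfix γ (S p)) ≤ Qfix γ (S p) := min_le_right _ _
      have h3 := ih (S p)
      rw [Function.iterate_succ_apply]
      set y := h ((S^[t] (S p)).1) with hy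
      have hyB := abs_le.mp (hB ((S^[t] (S p)).1))
      have hpB := abs_le.mp (hB p.1)
      push_cast
      nlinarith [mul_nonneg (mul_nonneg (by positivity : (0:ℝ) ≤ 2 * (t:ℝ)) (by linarith : (0:ℝ) ≤ 1 - γ)) hB0]
  -- the infimum is attained
  obtain ⟨T, hT⟩ : ∃ T : ℕ, h ((S^[T] (x, u, a)).1) = Q (x, u, a) := by
    have hfin : (Set.range fun t : ℕ => h ((S^[t] (x, u, a)).1)).Finite := by
      apply Set.Finite.subset (Set.finite_range h)
      rintro r ⟨t, rfl⟩
      exact ⟨_, rfl⟩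
    have hne : (Set.range fun t : ℕ => h ((S^[t] (x, u, a)).1)).Nonempty :=
      ⟨_, ⟨0, rfl⟩⟩
    have hmem := hne.csInf_mem hfin
    obtain ⟨T, hT⟩ := hmem
    exact ⟨T, hT.trans rfl⟩
  -- squeeze
  have hupper_tendsto :
      Filter.Tendsto (fun γ : ℝ => Q (x, u, a) + 2 * T * (1 - γ) * B)
        (nhdsWithin 1 (Set.Ioo (0 : ℝ) 1)) (nhds (Q (x, u, a))) := by
    have hc : Continuous (fun γ : ℝ => Q (x, u, a) + 2 * T * (1 - γ) * B) := by
      exact continuous_const.add ((continuous_const.mul (continuous_const.sub continuous_id)).mul continuous_const)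
    have h2 : Filter.Tendsto (fun γ : ℝ => Q (x, u, a) + 2 * T * (1 - γ) * B)
        (nhdsWithin 1 (Set.Ioo (0 : ℝ) 1)) (nhds (Q (x, u, a) + 2 * T * (1 - 1) * B)) :=
      (hc.tendsto 1).mono_left nhdsWithin_le_nhds
    simpa using h2
  have hlower_tendsto :
      Filter.Tendsto (fun _ : ℝ => Q (x, u, a))
        (nhdsWithin 1 (Set.Ioo (0 : ℝ) 1)) (nhds (Q (x, u, a))) := tendsto_const_nhds
  apply tendsto_of_tendsto_of_tendsto_of_le_of_le' hlower_tendsto hupper_tendsto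
  · filter_upwards [self_mem_nhdsWithin] with γ hγ
    exact hlow γ hγ (x, u, a)
  · filter_upwards [self_mem_nhdsWithin] with γ hγ
    calc Qfix γ (x, u, a) ≤ h ((S^[T] (x, u, a)).1) + 2 * T * (1 - γ) * B := hup γ hγ T (x, u, a)
    _ = Q (x, u, a) + 2 * T * (1 - γ) * B := by rw [hT]
end

section
/- For each γ ∈ (0,1), let Q_γ denote the unique fixed point of the safety Bellman operator T_h with discount factor γ. Then for every (x,u,a) ∈ X × U × A, Q_γ(x,u,a) converges to the optimal safety value Q_h^{*}(x,u,a) as γ → 1 from the left. -/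
open Filter Set

/-- Iterates of a self-map on a finite type all occur within the first `card + 1` steps. -/
lemma iterate_exists_le_card {P : Type*} [Fintype P] (g : P → P) (p : P) :
    ∀ t : ℕ, ∃ s ≤ Fintype.card P, g^[t] p = g^[s] p := by
  have key : ∀ (i j : ℕ), i < j → j ≤ Fintype.card P → g^[j] p = g^[i] p →
      ∀ t, ∃ s ≤ Fintype.card P, g^[t] p = g^[s] p := by
    intro i j hij hj hval t
    induction t using Nat.strong_induction_on with
    | _ t IH =>
      by_cases ht : t ≤ Fintype.card P
      · exact ⟨t, ht, rfl⟩
      · push_neg at ht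
        have hjt : j ≤ t := le_trans hj ht.le
        have h1 : g^[t] p = g^[t - (j - i)] p := by
          have h2 : g^[t] p = g^[t - j] (g^[j] p) := by
            rw [← Function.iterate_add_apply]; congr 1; omega
          rw [h2, hval, ← Function.iterate_add_apply]
          congr 1; omega
        obtain ⟨s, hs, hval2⟩ := IH (t - (j - i)) (by omega)
        exact ⟨s, hs, h1.trans hval2⟩
  obtain ⟨i, j, hne, hval⟩ := Fintype.exists_ne_map_eq_of_card_lt
    (fun i : Fin (Fintype.card P + 1) => g^[i] p) (by simp)
  rcases lt_or_gt_of_ne (Fin.val_ne_of_ne hne) with hlt | hlt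
  · exact key i j hlt (Nat.lt_succ_iff.1 j.isLt) hval.symm
  · exact key j i hlt (Nat.lt_succ_iff.1 i.isLt) hval

/-- Any fixed point of the safety Bellman operator is bounded by a bound on `|h|`. -/
lemma tb_fixed_abs_le {X U A : Type*}
    [Fintype X] [Nonempty X] [Fintype U] [Nonempty U] [Fintype A] [Nonempty A]
    (f : X → U → A → X) (h : X → ℝ) (γ : ℝ) (hγ0 : 0 < γ) (hγ1 : γ < 1)
    (Q : X × U × A → ℝ) (hQ : Tb f h γ Q = Q)
    (M : ℝ) (hM : ∀ y, |h y| ≤ M) : ∀ p, |Q p| ≤ M := by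
  have hne : (Finset.univ : Finset (X × U × A)).Nonempty := Finset.univ_nonempty
  set K := Finset.univ.sup' hne (fun p => |Q p|) with hKdef
  have hKle : ∀ p, |Q p| ≤ K := fun p => Finset.le_sup' (fun p => |Q p|) (Finset.mem_univ p)
  obtain ⟨p₀, -, hp₀⟩ := Finset.exists_mem_eq_sup' hne (fun p => |Q p|)
  have hM0 : 0 ≤ M := le_trans (abs_nonneg _) (hM (Classical.arbitrary X))
  have hK0 : 0 ≤ K := le_trans (abs_nonneg _) (hKle p₀)
  have habs : ∀ x' : X, |⨆ u' : U, ⨅ a' : A, Q (x', u', a')| ≤ K := by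
    intro x'
    rw [abs_le]
    constructor
    · obtain ⟨u₀⟩ := ‹Nonempty U›
      refine le_trans ?_ (le_ciSup (Set.Finite.bddAbove (Set.finite_range _)) u₀)
      exact le_ciInf fun a => (abs_le.1 (hKle _)).1
    · refine ciSup_le fun u' => ?_
      obtain ⟨a₀⟩ := ‹Nonempty A›
      exact le_trans (ciInf_le (Set.Finite.bddBelow (Set.finite_range _)) a₀)
        (abs_le.1 (hKle _)).2
  have hKM : K ≤ M := by
    by_contra hcon
    push_neg at hcon
    have hfp : Q p₀ = Tb f h γ Q p₀ := by rw [hQ]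
    have hh := abs_le.1 (hM p₀.1)
    have hs := abs_le.1 (habs (f p₀.1 p₀.2.1 p₀.2.2))
    have hmin : |min (h p₀.1) (⨆ u' : U, ⨅ a' : A, Q (f p₀.1 p₀.2.1 p₀.2.2, u', a'))| ≤ K := by
      rw [abs_le]
      exact ⟨le_min (by linarith) hs.1, le_trans (min_le_right _ _) hs.2⟩
    have h1 : |Q p₀| ≤ (1 - γ) * M + γ * K := by
      rw [hfp]
      unfold Tb
      refine le_trans (abs_add_le _ _) (add_le_add ?_ ?_)
      · rw [abs_mul, abs_of_nonneg (by linarith : (0:ℝ) ≤ 1 - γ)]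
        exact mul_le_mul_of_nonneg_left (hM _) (by linarith)
      · rw [abs_mul, abs_of_nonneg hγ0.le]
        exact mul_le_mul_of_nonneg_left hmin hγ0.le
    rw [← hp₀] at h1
    nlinarith
  exact fun p => le_trans (hKle p) hKM

/-- The optimal safety value is a lower bound on any fixed point of the
discounted safety Bellman operator. -/
lemma qhstar_le_fixed {X U A : Type*}
    [Fintype X] [Nonempty X] [Fintype U] [Nonempty U] [Fintype A] [Nonempty A]
    (f : X → U → A → X) (h : X → ℝ) (γ : ℝ) (hγ0 : 0 < γ) (hγ1 : γ < 1)
    (Q : X × U × A → ℝ) (hQ : Tb f h γ Q = Q)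
    (M : ℝ) (hM : ∀ y, |h y| ≤ M) (p : X × U × A) :
    Qhstar f h p ≤ Q p := by
  refine ciSup_le fun π => ?_
  -- adversary best response to `π` with respect to `Q`
  have hminex : ∀ y : X, ∃ a₀ : A, ∀ a, Q (y, π y, a₀) ≤ Q (y, π y, a) :=
    fun y => Finite.exists_min _
  choose μ hμ using hminex
  set g := stepFn f π μ with hg
  set N := Fintype.card (X × U × A) with hN
  -- recursion along the trajectory
  have hrec : ∀ t, (1 - γ) * h ((g^[t] p).1)
      + γ * min (h ((g^[t] p).1)) (Q (g^[t+1] p)) ≤ Q (g^[t] p) := by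
    intro t
    conv_rhs => rw [← hQ]
    have hsup : Q (g^[t+1] p) ≤
        ⨆ u' : U, ⨅ a' : A, Q (f (g^[t] p).1 (g^[t] p).2.1 (g^[t] p).2.2, u', a') := by
      rw [Function.iterate_succ_apply']
      set x' := f (g^[t] p).1 (g^[t] p).2.1 (g^[t] p).2.2 with hx'
      have hstep : g (g^[t] p) = (x', π x', μ x') := rfl
      rw [hstep]
      refine le_trans ?_ (le_ciSup (Set.Finite.bddAbove (Set.finite_range _)) (π x'))
      exact le_ciInf fun a => hμ x' a
    unfold Tb
    have h2 : min (h ((g^[t] p).1)) (Q (g^[t+1] p)) ≤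
        min (h ((g^[t] p).1))
          (⨆ u' : U, ⨅ a' : A, Q (f (g^[t] p).1 (g^[t] p).2.1 (g^[t] p).2.2, u', a')) :=
      min_le_min le_rfl hsup
    nlinarith [mul_le_mul_of_nonneg_left h2 hγ0.le]
  -- minimum of `Q` along the first `N+1` trajectory points
  have hrne : (Finset.range (N + 1)).Nonempty := ⟨0, by simp⟩
  set c := (Finset.range (N + 1)).inf' hrne (fun t => Q (g^[t] p)) with hc
  have hc_le : ∀ t, c ≤ Q (g^[t] p) := by
    intro t
    obtain ⟨s, hs, he⟩ := iterate_exists_le_card g p t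
    rw [he]
    exact Finset.inf'_le _ (Finset.mem_range.2 (by omega))
  obtain ⟨t₀, ht₀mem, ht₀⟩ := Finset.exists_mem_eq_inf' hrne (fun t => Q (g^[t] p))
  have hstop : h ((g^[t₀] p).1) ≤ c := by
    by_contra hcon
    push_neg at hcon
    have h1 := hrec t₀
    have h2 : c ≤ min (h ((g^[t₀] p).1)) (Q (g^[t₀+1] p)) := le_min hcon.le (hc_le _)
    rw [← ht₀] at h1
    nlinarith [mul_le_mul_of_nonneg_left h2 hγ0.le]
  -- conclude
  have hQhle : Qh f h π μ p ≤ Q p := by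
    have hb : BddBelow (Set.range fun t => h (((stepFn f π μ)^[t] p).1)) :=
      ⟨-M, by rintro v ⟨t, rfl⟩; exact (abs_le.1 (hM _)).1⟩
    refine le_trans (ciInf_le hb t₀) ?_
    calc h ((g^[t₀] p).1) ≤ c := hstop
      _ ≤ Q (g^[0] p) := hc_le 0
      _ = Q p := by rw [Function.iterate_zero_apply]
  refine le_trans (ciInf_le ?_ μ) hQhle
  refine ⟨-M, ?_⟩
  rintro v ⟨μ', rfl⟩
  exact le_ciInf fun t => (abs_le.1 (hM _)).1

/-- A fixed point of the discounted safety Bellman operator exceeds the optimal safety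
value by at most `2 M (1 - γ ^ N) / γ ^ N`. -/
lemma fixed_le_qhstar {X U A : Type*}
    [Fintype X] [Nonempty X] [Fintype U] [Nonempty U] [Fintype A] [Nonempty A]
    (f : X → U → A → X) (h : X → ℝ) (γ : ℝ) (hγ0 : 0 < γ) (hγ1 : γ < 1)
    (Q : X × U × A → ℝ) (hQ : Tb f h γ Q = Q)
    (M : ℝ) (hM : ∀ y, |h y| ≤ M) (p : X × U × A) :
    Q p ≤ Qhstar f h p +
      2 * M * (1 - γ ^ Fintype.card (X × U × A)) / γ ^ Fintype.card (X × U × A) := by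
  set N := Fintype.card (X × U × A) with hN
  have hQb : ∀ q, |Q q| ≤ M := tb_fixed_abs_le f h γ hγ0 hγ1 Q hQ M hM
  have hγN : (0:ℝ) < γ ^ N := pow_pos hγ0 N
  have hγN1 : γ ^ N ≤ 1 := pow_le_one₀ hγ0.le hγ1.le
  -- the optimal protagonist policy w.r.t. `Q`
  have hmaxex : ∀ y : X, ∃ u₀ : U, ∀ u, (⨅ a : A, Q (y, u, a)) ≤ ⨅ a : A, Q (y, u₀, a) :=
    fun y => Finite.exists_max _
  choose π hπ using hmaxex
  have key : Q p - 2 * M * (1 - γ ^ N) / γ ^ N ≤ Qhpi f h π p := by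
    refine le_ciInf fun μ => ?_
    set g := stepFn f π μ with hg
    -- recursion along trajectory
    have hrec : ∀ t, Q (g^[t] p) ≤ (1 - γ) * h ((g^[t] p).1)
        + γ * min (h ((g^[t] p).1)) (Q (g^[t+1] p)) := by
      intro t
      conv_lhs => rw [← hQ]
      have hsup : (⨆ u' : U, ⨅ a' : A, Q (f (g^[t] p).1 (g^[t] p).2.1 (g^[t] p).2.2, u', a'))
          ≤ Q (g^[t+1] p) := by
        rw [Function.iterate_succ_apply']
        set x' := f (g^[t] p).1 (g^[t] p).2.1 (g^[t] p).2.2 with hx'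
        have hstep : g (g^[t] p) = (x', π x', μ x') := rfl
        rw [hstep]
        refine ciSup_le fun u' => le_trans (hπ x' u') ?_
        exact ciInf_le (Set.Finite.bddBelow (Set.finite_range _)) (μ x')
      unfold Tb
      have h2 : min (h ((g^[t] p).1))
          (⨆ u' : U, ⨅ a' : A, Q (f (g^[t] p).1 (g^[t] p).2.1 (g^[t] p).2.2, u', a'))
          ≤ min (h ((g^[t] p).1)) (Q (g^[t+1] p)) := min_le_min le_rfl hsup
      nlinarith [mul_le_mul_of_nonneg_left h2 hγ0.le]
    -- `Q` is below `h` along the trajectory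
    have hQle_h : ∀ t, Q (g^[t] p) ≤ h ((g^[t] p).1) := by
      intro t
      have h1 := hrec t
      have h2 : min (h ((g^[t] p).1)) (Q (g^[t+1] p)) ≤ h ((g^[t] p).1) := min_le_left _ _
      nlinarith [mul_le_mul_of_nonneg_left h2 hγ0.le]
    -- discounted lower bound
    have hgeom : ∀ t, Q p - (1 - γ ^ t) * M ≤ γ ^ t * Q (g^[t] p) := by
      intro t
      induction t with
      | zero => simp
      | succ t IH =>
        have h1 := hrec t
        have hht : h ((g^[t] p).1) ≤ M := (abs_le.1 (hM _)).2
        have h2 : Q (g^[t] p) ≤ (1 - γ) * M + γ * Q (g^[t+1] p) := by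
          have h3 : min (h ((g^[t] p).1)) (Q (g^[t+1] p)) ≤ Q (g^[t+1] p) := min_le_right _ _
          nlinarith [mul_le_mul_of_nonneg_left h3 hγ0.le]
        have h4 := mul_le_mul_of_nonneg_left h2 (pow_nonneg hγ0.le t)
        have h5 : (0:ℝ) ≤ γ ^ t := pow_nonneg hγ0.le t
        have h6 : γ ^ t ≤ 1 := pow_le_one₀ hγ0.le hγ1.le
        have hM0 : 0 ≤ M := le_trans (abs_nonneg _) (hM ((g^[t] p).1))
        rw [pow_succ]
        nlinarith
    -- bound valid along the whole trajectory
    have hbound : ∀ t, Q p - 2 * M * (1 - γ ^ N) / γ ^ N ≤ h ((g^[t] p).1) := by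
      intro t
      obtain ⟨s, hs, he⟩ := iterate_exists_le_card g p t
      rw [he]
      have hgs : γ ^ N ≤ γ ^ s := pow_le_pow_of_le_one hγ0.le hγ1.le hs
      have hQqs := hQle_h s
      have hg := hgeom s
      have habs1 := abs_le.1 (hQb (g^[s] p))
      have habs2 := abs_le.1 (hQb p)
      have hkey : Q p - 2 * M * (1 - γ ^ N) / γ ^ N ≤ Q (g^[s] p) := by
        rw [sub_le_iff_le_add, ← sub_le_iff_le_add', le_div_iff₀ hγN]
        nlinarith [mul_nonneg (sub_nonneg.2 hgs) (sub_nonneg.2 habs1.2),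
          mul_nonneg (sub_nonneg.2 hγN1) (by linarith : (0:ℝ) ≤ Q p + M)]
      exact le_trans hkey hQqs
    exact le_ciInf hbound
  have hQhpiM : ∀ π' : X → U, Qhpi f h π' p ≤ M := by
    intro π'
    obtain ⟨μ₀⟩ : Nonempty (X → A) := inferInstance
    unfold Qhpi
    refine le_trans (ciInf_le ⟨-M, ?_⟩ μ₀) ?_
    · rintro v ⟨μ', rfl⟩; exact le_ciInf fun t => (abs_le.1 (hM _)).1
    · unfold Qh
      refine le_trans (ciInf_le ⟨-M, ?_⟩ 0) ?_
      · rintro v ⟨t, rfl⟩; exact (abs_le.1 (hM _)).1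
      · simpa using (abs_le.1 (hM p.1)).2
  have hQhpi_le : Qhpi f h π p ≤ Qhstar f h p := by
    unfold Qhstar
    exact le_ciSup (f := fun π' : X → U => Qhpi f h π' p)
      ⟨M, by rintro v ⟨π', rfl⟩; exact hQhpiM π'⟩ π
  linarith [key, hQhpi_le]

/-- As `γ → 1⁻`, the fixed point of the safety Bellman operator `T_h` with discount
factor `γ` converges pointwise to the optimal safety value `Q_h^{*}`. -/
theorem fixed_point_tendsto_optimal_safety_value {X U A : Type*}
    [Fintype X] [Nonempty X] [Fintype U] [Nonempty U] [Fintype A] [Nonempty A]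
    (f : X → U → A → X) (h : X → ℝ)
    (Qfix : ℝ → (X × U × A → ℝ))
    (hfix : ∀ γ ∈ Set.Ioo (0 : ℝ) 1, Tb f h γ (Qfix γ) = Qfix γ)
    (x : X) (u : U) (a : A) :
    Filter.Tendsto (fun γ : ℝ => Qfix γ (x, u, a))
      (nhdsWithin 1 (Set.Ioo (0 : ℝ) 1)) (nhds (Qhstar f h (x, u, a))) := by
  have hne : (Finset.univ : Finset X).Nonempty := Finset.univ_nonempty
  set M := Finset.univ.sup' hne (fun y => |h y|) with hMdef
  have hM : ∀ y, |h y| ≤ M := fun y => Finset.le_sup' (fun y => |h y|) (Finset.mem_univ y)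
  set N := Fintype.card (X × U × A) with hN
  set p : X × U × A := (x, u, a) with hp
  set Qs := Qhstar f h p with hQs
  have hlow : ∀ γ ∈ Set.Ioo (0:ℝ) 1, Qs ≤ Qfix γ p := fun γ hγ =>
    qhstar_le_fixed f h γ hγ.1 hγ.2 (Qfix γ) (hfix γ hγ) M hM p
  have hupp : ∀ γ ∈ Set.Ioo (0:ℝ) 1, Qfix γ p ≤ Qs + 2 * M * (1 - γ ^ N) / γ ^ N := fun γ hγ =>
    fixed_le_qhstar f h γ hγ.1 hγ.2 (Qfix γ) (hfix γ hγ) M hM p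
  have htendhi : Tendsto (fun γ : ℝ => Qs + 2 * M * (1 - γ ^ N) / γ ^ N)
      (nhdsWithin 1 (Set.Ioo (0:ℝ) 1)) (nhds Qs) := by
    have hc : ContinuousAt (fun γ : ℝ => Qs + 2 * M * (1 - γ ^ N) / γ ^ N) 1 := by
      apply ContinuousAt.add continuousAt_const
      apply ContinuousAt.div (by fun_prop) (by fun_prop)
      simp
    have h0 : Qs + 2 * M * (1 - (1:ℝ) ^ N) / (1:ℝ) ^ N = Qs := by norm_num
    have := hc.tendsto.mono_left (nhdsWithin_le_nhds (s := Set.Ioo (0:ℝ) 1))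
    rwa [h0] at this
  exact tendsto_of_tendsto_of_tendsto_of_le_of_le' tendsto_const_nhds htendhi
    (eventually_nhdsWithin_of_forall hlow) (eventually_nhdsWithin_of_forall hupp)
end

section
/- Let π be a deterministic protagonist policy, define S_r^{π} = { x ∈ X : max_{u ∈ U} min_{a ∈ A} Q_h^{π}(x,u,a) ≥ 0 } and, for x ∈ X, U_s^{π}(x) = { u ∈ U : min_{a ∈ A} Q_h^{π}(x,u,a) ≥ 0 }. Suppose κ : X → U satisfies κ(x) ∈ U_s^{π}(x) for every x ∈ S_r^{π}. Then for every initial state x_0 ∈ S_r^{π} and every sequence of adversary actions (a_t)_{t∈ℕ} in A, the trajectory defined by x_{t+1} = f x_t (κ(x_t)) a_t satisfies x_t ∈ S_r^{π} for all t ∈ ℕ. The same conclusion holds with Q_h^{*} in place of Q_h^{π} (i.e., with S_r^{*} = { x : max_u min_a Q_h^{*}(x,u,a) ≥ 0 } and U_s^{*}(x) = { u : min_a Q_h^{*}(x,u,a) ≥ 0 }). -/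
set_option linter.unusedSectionVars false

def pathL {X A : Type*} (g : X → A → X) : X → List A → List X
  | z, [] => [z]
  | z, a :: l => z :: pathL g (g z a) l

lemma self_mem_pathL {X A : Type*} (g : X → A → X) (z : X) (l : List A) :
    z ∈ pathL g z l := by cases l <;> simp [pathL]

lemma mem_pathL_suffix {X A : Type*} (g : X → A → X) :
    ∀ (l : List A) (w y : X), y ∈ pathL g w l →
      ∃ l₂ : List A, l₂.length ≤ l.length ∧ l₂.foldl g y = l.foldl g w ∧
        ∀ v ∈ pathL g y l₂, v ∈ pathL g w l := by
  intro l
  induction l with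
  | nil =>
    intro w y hy
    simp [pathL] at hy
    subst hy
    exact ⟨[], le_rfl, rfl, fun v hv => hv⟩
  | cons a l ih =>
    intro w y hy
    simp only [pathL, List.mem_cons] at hy
    rcases hy with rfl | hy
    · exact ⟨a :: l, le_rfl, rfl, fun v hv => hv⟩
    · obtain ⟨l₂, h1, h2, h3⟩ := ih (g w a) y hy
      refine ⟨l₂, h1.trans (Nat.le_succ _), ?_, fun v hv => ?_⟩
      · simpa using h2
      · simp only [pathL, List.mem_cons]
        exact Or.inr (h3 v hv)

lemma markov_reach_aux {X A : Type*} [Nonempty A] (g : X → A → X) :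
    ∀ (n : ℕ) (l : List A), l.length ≤ n → ∀ z : X,
      ∃ (μ : X → A) (t : ℕ), (fun w => g w (μ w))^[t] z = l.foldl g z ∧
        ∀ s ≤ t, (fun w => g w (μ w))^[s] z ∈ pathL g z l := by
  intro n
  induction n with
  | zero =>
    intro l hl z
    have : l = [] := List.length_eq_zero_iff.mp (Nat.le_zero.mp hl)
    subst this
    refine ⟨fun _ => Classical.arbitrary A, 0, rfl, ?_⟩
    intro s hs
    have : s = 0 := Nat.le_zero.mp hs
    subst this
    exact self_mem_pathL g z []
  | succ n ih =>
    intro l hl z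
    match l with
    | [] =>
      refine ⟨fun _ => Classical.arbitrary A, 0, rfl, ?_⟩
      intro s hs
      have : s = 0 := Nat.le_zero.mp hs
      subst this
      exact self_mem_pathL g z []
    | a :: l' =>
      have hl' : l'.length ≤ n := Nat.succ_le_succ_iff.mp hl
      by_cases hz : z ∈ pathL g (g z a) l'
      · obtain ⟨l₂, h1, h2, h3⟩ := mem_pathL_suffix g l' (g z a) z hz
        obtain ⟨μ, t, ht, hmem⟩ := ih l₂ (h1.trans hl') z
        refine ⟨μ, t, ?_, ?_⟩
        · rw [ht, h2]; simp
        · intro s hs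
          simp only [pathL, List.mem_cons]
          exact Or.inr (h3 _ (hmem s hs))
      · obtain ⟨μ, t, ht, hmem⟩ := ih l' hl' (g z a)
        classical
        have key : ∀ s, s ≤ t → (fun w => g w (Function.update μ z a w))^[s+1] z
            = (fun w => g w (μ w))^[s] (g z a) := by
          intro s
          induction s with
          | zero =>
            intro _
            simp [Function.update_self]
          | succ s ihs =>
            intro hs
            have hs' : s ≤ t := Nat.le_of_succ_le hs
            have hne : (fun w => g w (μ w))^[s] (g z a) ≠ z := by
              intro hEq
              have h' := hmem s hs'
              rw [hEq] at h'
              exact hz h'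
            rw [Function.iterate_succ_apply', ihs hs', Function.iterate_succ_apply']
            simp [Function.update_of_ne hne]
        refine ⟨Function.update μ z a, t + 1, ?_, ?_⟩
        · rw [key t le_rfl, ht]; simp
        · intro s hs
          match s with
          | 0 => exact self_mem_pathL g z (a :: l')
          | s + 1 =>
            rw [key s (Nat.succ_le_succ_iff.mp hs)]
            simp only [pathL, List.mem_cons]
            exact Or.inr (hmem s (Nat.succ_le_succ_iff.mp hs))

lemma markov_reach {X A : Type*} [Nonempty A] (g : X → A → X) (l : List A) (z : X) :
    ∃ (μ : X → A) (t : ℕ), (fun w => g w (μ w))^[t] z = l.foldl g z := by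
  obtain ⟨μ, t, ht, -⟩ := markov_reach_aux g l.length l le_rfl z
  exact ⟨μ, t, ht⟩

section FI
variable {X U A : Type*}
  [Fintype X] [Nonempty X] [Fintype U] [Nonempty U] [Fintype A] [Nonempty A]
  (f : X → U → A → X) (h : X → ℝ)

noncomputable def hmin : ℝ := Finset.univ.inf' Finset.univ_nonempty h
noncomputable def hmax : ℝ := Finset.univ.sup' Finset.univ_nonempty h

lemma hmin_le (z : X) : hmin h ≤ h z := Finset.inf'_le h (Finset.mem_univ z)
lemma le_hmax (z : X) : h z ≤ hmax h := Finset.le_sup' h (Finset.mem_univ z)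

lemma Qh_lb (π : X → U) (μ : X → A) (p : X × U × A) : hmin h ≤ Qh f h π μ p :=
  le_ciInf fun _ => hmin_le h _

lemma Qh_bddBelow (π : X → U) (μ : X → A) (p : X × U × A) :
    BddBelow (Set.range fun t : ℕ => h (((stepFn f π μ)^[t] p).1)) :=
  ⟨hmin h, by rintro r ⟨t, rfl⟩; exact hmin_le h _⟩

lemma Qh_ub (π : X → U) (μ : X → A) (p : X × U × A) : Qh f h π μ p ≤ hmax h :=
  (ciInf_le (Qh_bddBelow f h π μ p) 0).trans (le_hmax h _)

lemma Qhpi_bddBelow (π : X → U) (p : X × U × A) :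
    BddBelow (Set.range fun μ : X → A => Qh f h π μ p) :=
  ⟨hmin h, by rintro r ⟨μ, rfl⟩; exact Qh_lb f h π μ p⟩

lemma Qhpi_lb (π : X → U) (p : X × U × A) : hmin h ≤ Qhpi f h π p :=
  le_ciInf fun μ => Qh_lb f h π μ p

lemma Qhpi_ub (π : X → U) (p : X × U × A) : Qhpi f h π p ≤ hmax h :=
  (ciInf_le (Qhpi_bddBelow f h π p) (Classical.arbitrary _)).trans
    (Qh_ub f h π _ p)

lemma Qhpi_le_Qhstar (π : X → U) (p : X × U × A) : Qhpi f h π p ≤ Qhstar f h p :=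
  le_ciSup (f := fun π' : X → U => Qhpi f h π' p)
    ⟨hmax h, by rintro r ⟨π', rfl⟩; exact Qhpi_ub f h π' p⟩ π

lemma Qhstar_lb (p : X × U × A) : hmin h ≤ Qhstar f h p :=
  (Qhpi_lb f h (Classical.arbitrary _) p).trans (Qhpi_le_Qhstar f h _ p)

lemma Qhstar_ub (p : X × U × A) : Qhstar f h p ≤ hmax h :=
  ciSup_le fun π => Qhpi_ub f h π p

/-- `stepFn` iterates: after the first step the system is in closed loop. -/
lemma stepFn_iterate (π : X → U) (μ : X → A) (p : X × U × A) (t : ℕ) :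
    (stepFn f π μ)^[t + 1] p =
      ((fun w => f w (π w) (μ w))^[t] (f p.1 p.2.1 p.2.2),
       π ((fun w => f w (π w) (μ w))^[t] (f p.1 p.2.1 p.2.2)),
       μ ((fun w => f w (π w) (μ w))^[t] (f p.1 p.2.1 p.2.2))) := by
  induction t with
  | zero => simp [stepFn]
  | succ t ih =>
    rw [Function.iterate_succ_apply', ih, Function.iterate_succ_apply']
    simp [stepFn]

/-- Every state on the trajectory from `(x', π x', a')` is a fold of the one-step map. -/
lemma traj_foldl (π : X → U) (μ : X → A) (x' : X) (a' : A) (t : ℕ) :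
    ∃ (l : List A) (a'' : A),
      (stepFn f π μ)^[t] (x', π x', a') =
        (l.foldl (fun w b => f w (π w) b) x',
         π (l.foldl (fun w b => f w (π w) b) x'), a'') := by
  induction t with
  | zero => exact ⟨[], a', rfl⟩
  | succ t ih =>
    obtain ⟨l, a'', hl⟩ := ih
    refine ⟨l ++ [a''], μ (f (l.foldl (fun w b => f w (π w) b) x')
      (π (l.foldl (fun w b => f w (π w) b) x')) a''), ?_⟩
    rw [Function.iterate_succ_apply', hl]
    simp [stepFn, List.foldl_append]


lemma Qhpi_le_step (π : X → U) (x : X) (u : U) (a a' : A) :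
    Qhpi f h π (x, u, a) ≤ Qhpi f h π (f x u a, π (f x u a), a') := by
  set x' := f x u a with hx'
  refine le_ciInf fun μ => ?_
  have hfin : (Set.range fun t : ℕ =>
      h (((stepFn f π μ)^[t] (x', π x', a')).1)).Finite :=
    (Set.finite_range h).subset (by rintro r ⟨t, rfl⟩; exact ⟨_, rfl⟩)
  have hmem : Qh f h π μ (x', π x', a') ∈ Set.range fun t : ℕ =>
      h (((stepFn f π μ)^[t] (x', π x', a')).1) := by
    have heq : Qh f h π μ (x', π x', a') = sInf (Set.range fun t : ℕ =>
        h (((stepFn f π μ)^[t] (x', π x', a')).1)) := rfl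
    rw [heq]
    exact (Set.range_nonempty _).csInf_mem hfin
  obtain ⟨t0, ht0⟩ := hmem
  obtain ⟨l, a'', hl⟩ := traj_foldl f π μ x' a' t0
  obtain ⟨μ₀, s, hs⟩ := markov_reach (fun w b => f w (π w) b) l x'
  have key : (((stepFn f π μ₀)^[s + 1] (x, u, a)).1)
      = l.foldl (fun w b => f w (π w) b) x' := by
    rw [stepFn_iterate]
    simpa using hs
  have ht0' : h (((stepFn f π μ)^[t0] (x', π x', a')).1) = Qh f h π μ (x', π x', a') := ht0
  have hval : h (l.foldl (fun w b => f w (π w) b) x') = Qh f h π μ (x', π x', a') := by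
    rw [hl] at ht0'
    exact ht0'
  calc Qhpi f h π (x, u, a) ≤ Qh f h π μ₀ (x, u, a) :=
        ciInf_le (Qhpi_bddBelow f h π _) μ₀
    _ ≤ h (((stepFn f π μ₀)^[s + 1] (x, u, a)).1) :=
        ciInf_le (Qh_bddBelow f h π μ₀ _) (s + 1)
    _ = Qh f h π μ (x', π x', a') := by rw [key, hval]


lemma Qhpi_step (π : X → U) (x : X) (u : U) (a : A) :
    Qhpi f h π (x, u, a) ≤ ⨆ u' : U, ⨅ a' : A, Qhpi f h π (f x u a, u', a') := by
  have h1 : Qhpi f h π (x, u, a) ≤ ⨅ a' : A, Qhpi f h π (f x u a, π (f x u a), a') :=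
    le_ciInf fun a' => Qhpi_le_step f h π x u a a'
  refine h1.trans (le_ciSup
    (f := fun u' => ⨅ a' : A, Qhpi f h π (f x u a, u', a')) ?_ (π (f x u a)))
  refine ⟨hmax h, ?_⟩
  rintro r ⟨u', rfl⟩
  exact (ciInf_le ⟨hmin h, by rintro r ⟨a'', rfl⟩; exact Qhpi_lb f h π _⟩
    (Classical.arbitrary A)).trans (Qhpi_ub f h π _)

lemma Qhstar_step (x : X) (u : U) (a : A) :
    Qhstar f h (x, u, a) ≤ ⨆ u' : U, ⨅ a' : A, Qhstar f h (f x u a, u', a') := by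
  refine ciSup_le fun π => ?_
  have h1 : Qhpi f h π (x, u, a) ≤ ⨅ a' : A, Qhstar f h (f x u a, π (f x u a), a') :=
    le_ciInf fun a' => (Qhpi_le_step f h π x u a a').trans (Qhpi_le_Qhstar f h π _)
  refine h1.trans (le_ciSup
    (f := fun u' => ⨅ a' : A, Qhstar f h (f x u a, u', a')) ?_ (π (f x u a)))
  refine ⟨hmax h, ?_⟩
  rintro r ⟨u', rfl⟩
  exact (ciInf_le ⟨hmin h, by rintro r ⟨a'', rfl⟩; exact Qhstar_lb f h _⟩
    (Classical.arbitrary A)).trans (Qhstar_ub f h _)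

end FI

/-- Forward invariance of the robust invariant sets: any policy `κ` selecting, on the
robust invariant set, actions whose worst-case safety value is nonnegative keeps the
system inside the robust invariant set, no matter what adversary actions are taken.
The first conjunct is stated for the robust invariant set `S_r^{π}` of a policy `π`
(via `Q_h^{π}`), the second for the maximal robust invariant set `S_r^{*}`
(via `Q_h^{*}`). -/
theorem forward_invariance_robust_invariant_sets {X U A : Type*}
    [Fintype X] [Nonempty X] [Fintype U] [Nonempty U] [Fintype A] [Nonempty A]
    (f : X → U → A → X) (h : X → ℝ) :
    (∀ (π : X → U) (κ : X → U),
      (∀ x : X, (0 ≤ ⨆ u : U, ⨅ a : A, Qhpi f h π (x, u, a)) →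
        0 ≤ ⨅ a : A, Qhpi f h π (x, κ x, a)) →
      ∀ (xs : ℕ → X) (as : ℕ → A),
        (0 ≤ ⨆ u : U, ⨅ a : A, Qhpi f h π (xs 0, u, a)) →
        (∀ t : ℕ, xs (t + 1) = f (xs t) (κ (xs t)) (as t)) →
        ∀ t : ℕ, 0 ≤ ⨆ u : U, ⨅ a : A, Qhpi f h π (xs t, u, a)) ∧
    (∀ κ : X → U,
      (∀ x : X, (0 ≤ ⨆ u : U, ⨅ a : A, Qhstar f h (x, u, a)) →
        0 ≤ ⨅ a : A, Qhstar f h (x, κ x, a)) →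
      ∀ (xs : ℕ → X) (as : ℕ → A),
        (0 ≤ ⨆ u : U, ⨅ a : A, Qhstar f h (xs 0, u, a)) →
        (∀ t : ℕ, xs (t + 1) = f (xs t) (κ (xs t)) (as t)) →
        ∀ t : ℕ, 0 ≤ ⨆ u : U, ⨅ a : A, Qhstar f h (xs t, u, a)) := by
  constructor
  · intro π κ hκ xs as h0 hstep t
    induction t with
    | zero => exact h0
    | succ t ih =>
      have h1 : 0 ≤ ⨅ a : A, Qhpi f h π (xs t, κ (xs t), a) := hκ (xs t) ih
      have h2 : 0 ≤ Qhpi f h π (xs t, κ (xs t), as t) :=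
        h1.trans (ciInf_le ⟨hmin h, by rintro r ⟨a, rfl⟩; exact Qhpi_lb f h π _⟩ (as t))
      have h3 := h2.trans (Qhpi_step f h π (xs t) (κ (xs t)) (as t))
      rwa [← hstep t] at h3
  · intro κ hκ xs as h0 hstep t
    induction t with
    | zero => exact h0
    | succ t ih =>
      have h1 : 0 ≤ ⨅ a : A, Qhstar f h (xs t, κ (xs t), a) := hκ (xs t) ih
      have h2 : 0 ≤ Qhstar f h (xs t, κ (xs t), as t) :=
        h1.trans (ciInf_le ⟨hmin h, by rintro r ⟨a, rfl⟩; exact Qhstar_lb f h _⟩ (as t))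
      have h3 := h2.trans (Qhstar_step f h (xs t) (κ (xs t)) (as t))
      rwa [← hstep t] at h3
end

section
/- Let π be a deterministic protagonist policy and let Q_π be the unique fixed point of T_h^{π}. Let π' be a deterministic protagonist policy that is greedy with respect to Q_π, i.e. for every x ∈ X, min_{a ∈ A} Q_π(x, π'(x), a) = max_{u ∈ U} min_{a ∈ A} Q_π(x, u, a). Let Q_{π'} be the unique fixed point of T_h^{π'} and let Q* be the unique fixed point of the safety Bellman operator T_h. Then pointwise on X × U × A: Q_π ≤ T_h(Q_π) ≤ Q_{π'} ≤ Q*. -/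
section Aux

set_option linter.unusedSectionVars false

variable {X U A : Type*} [Fintype X] [Nonempty X] [Fintype U] [Nonempty U]
  [Fintype A] [Nonempty A]

private lemma bddB {ι : Type*} [Finite ι] (g : ι → ℝ) : BddBelow (Set.range g) :=
  Set.Finite.bddBelow (Set.finite_range g)

private lemma bddA {ι : Type*} [Finite ι] (g : ι → ℝ) : BddAbove (Set.range g) :=
  Set.Finite.bddAbove (Set.finite_range g)

private lemma min_shift (a b c : ℝ) (hc : 0 ≤ c) : min a (b + c) ≤ min a b + c := by
  calc min a (b + c) ≤ min (a + c) (b + c) := min_le_min (by linarith) le_rfl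
    _ = min a b + c := min_add_add_right a b c

private lemma Tpi_mono (f : X → U → A → X) (h : X → ℝ) {γ : ℝ} (hγ : 0 ≤ γ)
    (π : X → U) {Q1 Q2 : X × U × A → ℝ} (hle : ∀ p, Q1 p ≤ Q2 p) (p : X × U × A) :
    Tpi f h γ π Q1 p ≤ Tpi f h γ π Q2 p := by
  unfold Tpi
  have hinf : (⨅ a' : A, Q1 (f p.1 p.2.1 p.2.2, π (f p.1 p.2.1 p.2.2), a'))
      ≤ ⨅ a' : A, Q2 (f p.1 p.2.1 p.2.2, π (f p.1 p.2.1 p.2.2), a') :=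
    ciInf_mono (bddB _) fun a => hle _
  exact add_le_add le_rfl (mul_le_mul_of_nonneg_left (min_le_min le_rfl hinf) hγ)

private lemma Tb_mono (f : X → U → A → X) (h : X → ℝ) {γ : ℝ} (hγ : 0 ≤ γ)
    {Q1 Q2 : X × U × A → ℝ} (hle : ∀ p, Q1 p ≤ Q2 p) (p : X × U × A) :
    Tb f h γ Q1 p ≤ Tb f h γ Q2 p := by
  unfold Tb
  have hsup : (⨆ u' : U, ⨅ a' : A, Q1 (f p.1 p.2.1 p.2.2, u', a'))
      ≤ ⨆ u' : U, ⨅ a' : A, Q2 (f p.1 p.2.1 p.2.2, u', a') :=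
    ciSup_mono (bddA _) fun u => ciInf_mono (bddB _) fun a => hle _
  exact add_le_add le_rfl (mul_le_mul_of_nonneg_left (min_le_min le_rfl hsup) hγ)

private lemma Tpi_shift (f : X → U → A → X) (h : X → ℝ) {γ : ℝ} (hγ : 0 ≤ γ)
    (π : X → U) (Q : X × U × A → ℝ) {c : ℝ} (hc : 0 ≤ c) (p : X × U × A) :
    Tpi f h γ π (fun q => Q q + c) p ≤ Tpi f h γ π Q p + γ * c := by
  unfold Tpi
  have hinf : (⨅ a' : A, (Q (f p.1 p.2.1 p.2.2, π (f p.1 p.2.1 p.2.2), a') + c))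
      = (⨅ a' : A, Q (f p.1 p.2.1 p.2.2, π (f p.1 p.2.1 p.2.2), a')) + c :=
    (ciInf_add (bddB _) c).symm
  rw [hinf]
  have hm := min_shift (h p.1)
    (⨅ a' : A, Q (f p.1 p.2.1 p.2.2, π (f p.1 p.2.1 p.2.2), a')) c hc
  nlinarith [hm]

private lemma Tb_shift (f : X → U → A → X) (h : X → ℝ) {γ : ℝ} (hγ : 0 ≤ γ)
    (Q : X × U × A → ℝ) {c : ℝ} (hc : 0 ≤ c) (p : X × U × A) :
    Tb f h γ (fun q => Q q + c) p ≤ Tb f h γ Q p + γ * c := by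
  unfold Tb
  have hsup : (⨆ u' : U, ⨅ a' : A, (Q (f p.1 p.2.1 p.2.2, u', a') + c))
      ≤ (⨆ u' : U, ⨅ a' : A, Q (f p.1 p.2.1 p.2.2, u', a')) + c := by
    refine ciSup_le fun u => ?_
    rw [(ciInf_add (bddB _) c).symm]
    have : (⨅ a' : A, Q (f p.1 p.2.1 p.2.2, u, a'))
        ≤ ⨆ u' : U, ⨅ a' : A, Q (f p.1 p.2.1 p.2.2, u', a') :=
      le_ciSup (f := fun u' => ⨅ a' : A, Q (f p.1 p.2.1 p.2.2, u', a')) (bddA _) u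
    linarith
  have hm := min_shift (h p.1) (⨆ u' : U, ⨅ a' : A, Q (f p.1 p.2.1 p.2.2, u', a')) c hc
  have hm2 : min (h p.1) (⨆ u' : U, ⨅ a' : A, (Q (f p.1 p.2.1 p.2.2, u', a') + c))
      ≤ min (h p.1) (⨆ u' : U, ⨅ a' : A, Q (f p.1 p.2.1 p.2.2, u', a')) + c :=
    le_trans (min_le_min le_rfl hsup) hm
  nlinarith [hm2]

/-- Generic comparison: if `P ≤ T P` pointwise, `T` is monotone, `T` pushes constants
through with factor `γ < 1`, and `R` is a fixed point of `T`, then `P ≤ R`. -/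
private lemma fixed_point_dominates {ι : Type*} [Fintype ι] [Nonempty ι]
    {γ : ℝ} (hγ0 : 0 ≤ γ) (hγ1 : γ < 1) (T : (ι → ℝ) → ι → ℝ)
    (mono : ∀ Q1 Q2 : ι → ℝ, (∀ p, Q1 p ≤ Q2 p) → ∀ p, T Q1 p ≤ T Q2 p)
    (shift : ∀ (Q : ι → ℝ) (c : ℝ), 0 ≤ c → ∀ p, T (fun q => Q q + c) p ≤ T Q p + γ * c)
    (P R : ι → ℝ) (hP : ∀ p, P p ≤ T P p) (hR : T R = R) :
    ∀ p, P p ≤ R p := by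
  set M : ℝ := max (⨆ p, (P p - R p)) 0 with hM
  have hM0 : 0 ≤ M := le_max_right _ _
  have hPR : ∀ p, P p ≤ R p + M := by
    intro p
    have h1 : P p - R p ≤ ⨆ p, (P p - R p) :=
      le_ciSup (f := fun p => P p - R p) (Set.Finite.bddAbove (Set.finite_range _)) p
    have h2 : (⨆ p, (P p - R p)) ≤ M := le_max_left _ _
    linarith
  have step : ∀ p, P p ≤ R p + γ * M := by
    intro p
    calc P p ≤ T P p := hP p
      _ ≤ T (fun q => R q + M) p := mono _ _ hPR p
      _ ≤ T R p + γ * M := shift R M hM0 p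
      _ = R p + γ * M := by rw [hR]
  have hsup : (⨆ p, (P p - R p)) ≤ γ * M := by
    refine ciSup_le fun p => ?_
    linarith [step p]
  have hMle : M ≤ γ * M := max_le hsup (by positivity)
  have hMzero : M = 0 := by nlinarith
  intro p
  have := hPR p
  rw [hMzero] at this
  linarith

end Aux

/-- Safety policy improvement: if `π'` is greedy with respect to the fixed point `Qπ`
of `T_h^{π}`, then pointwise `Qπ ≤ T_h(Qπ) ≤ Qπ' ≤ Q*`, where `Qπ'` is the fixed point
of `T_h^{π'}` and `Q*` is the fixed point of the safety Bellman operator `T_h`. -/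
theorem safety_policy_improvement {X U A : Type*}
    [Fintype X] [Nonempty X] [Fintype U] [Nonempty U] [Fintype A] [Nonempty A]
    (f : X → U → A → X) (h : X → ℝ) (γh : ℝ) (hγ : γh ∈ Set.Ioo (0 : ℝ) 1)
    (π π' : X → U) (Qpi Qpi' Qstar : X × U × A → ℝ)
    (hQpi : Tpi f h γh π Qpi = Qpi)
    (hgreedy : ∀ x : X, (⨅ a : A, Qpi (x, π' x, a)) = ⨆ u : U, ⨅ a : A, Qpi (x, u, a))
    (hQpi' : Tpi f h γh π' Qpi' = Qpi')
    (hQstar : Tb f h γh Qstar = Qstar) :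
    ∀ p : X × U × A,
      Qpi p ≤ Tb f h γh Qpi p ∧ Tb f h γh Qpi p ≤ Qpi' p ∧ Qpi' p ≤ Qstar p := by
  obtain ⟨hγ0, hγ1⟩ := hγ
  have hγ0' : (0:ℝ) ≤ γh := le_of_lt hγ0
  -- a policy operator is dominated by the Bellman operator
  have hTpiTb : ∀ (σ : X → U) (Q : X × U × A → ℝ) (p : X × U × A),
      Tpi f h γh σ Q p ≤ Tb f h γh Q p := by
    intro σ Q p
    unfold Tpi Tb
    have hle : (⨅ a' : A, Q (f p.1 p.2.1 p.2.2, σ (f p.1 p.2.1 p.2.2), a'))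
        ≤ ⨆ u' : U, ⨅ a' : A, Q (f p.1 p.2.1 p.2.2, u', a') :=
      le_ciSup (f := fun u' => ⨅ a' : A, Q (f p.1 p.2.1 p.2.2, u', a'))
        (Set.Finite.bddAbove (Set.finite_range _)) (σ (f p.1 p.2.1 p.2.2))
    exact add_le_add le_rfl (mul_le_mul_of_nonneg_left (min_le_min le_rfl hle) hγ0')
  -- Tb Qpi = Tpi π' Qpi pointwise (greedy)
  have hTbTpi : ∀ p, Tb f h γh Qpi p = Tpi f h γh π' Qpi p := by
    intro p
    unfold Tb Tpi
    rw [hgreedy (f p.1 p.2.1 p.2.2)]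
  -- Qpi ≤ Tb Qpi
  have h1 : ∀ p, Qpi p ≤ Tb f h γh Qpi p := by
    intro p
    conv_lhs => rw [← hQpi]
    exact hTpiTb π Qpi p
  -- Qpi ≤ Tpi π' Qpi
  have hP : ∀ p, Qpi p ≤ Tpi f h γh π' Qpi p := fun p => (hTbTpi p) ▸ h1 p
  -- Qpi ≤ Qpi'
  have h12 : ∀ p, Qpi p ≤ Qpi' p :=
    fixed_point_dominates hγ0' hγ1 (Tpi f h γh π')
      (fun Q1 Q2 hle => Tpi_mono f h hγ0' π' hle)
      (fun Q c hc => Tpi_shift f h hγ0' π' Q hc) Qpi Qpi' hP hQpi'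
  -- Tb Qpi ≤ Qpi'
  have h2 : ∀ p, Tb f h γh Qpi p ≤ Qpi' p := by
    intro p
    rw [hTbTpi p]
    calc Tpi f h γh π' Qpi p ≤ Tpi f h γh π' Qpi' p := Tpi_mono f h hγ0' π' h12 p
      _ = Qpi' p := by rw [hQpi']
  -- Qpi' ≤ Qstar
  have hP' : ∀ p, Qpi' p ≤ Tb f h γh Qpi' p := by
    intro p
    conv_lhs => rw [← hQpi']
    exact hTpiTb π' Qpi' p
  have h3 : ∀ p, Qpi' p ≤ Qstar p :=
    fixed_point_dominates hγ0' hγ1 (Tb f h γh)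
      (fun Q1 Q2 hle => Tb_mono f h hγ0' hle)
      (fun Q c hc => Tb_shift f h hγ0' Q hc) Qpi' Qstar hP' hQstar
  exact fun p => ⟨h1 p, h2 p, h3 p⟩
end

section
/- Define a sequence of deterministic protagonist policies by: π_0 : X → U arbitrary; Q_k is the unique fixed point of T_h^{π_k}; and π_{k+1} is greedy with respect to Q_k, i.e. for every x ∈ X, min_{a ∈ A} Q_k(x, π_{k+1}(x), a) = max_{u ∈ U} min_{a ∈ A} Q_k(x, u, a). Then the sequence (Q_k) is pointwise nondecreasing and there exists K ∈ ℕ such that for all k ≥ K, Q_k equals the unique fixed point Q* of the safety Bellman operator T_h. -/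
private lemma myCiInf_le_ciInf_add {ι : Type*} [Finite ι] [Nonempty ι]
    (F G : ι → ℝ) (m : ℝ) (hfg : ∀ i, F i ≤ G i + m) :
    (⨅ i, F i) ≤ (⨅ i, G i) + m := by
  obtain ⟨i0, hi0⟩ := Finite.exists_min G
  calc (⨅ i, F i) ≤ F i0 := ciInf_le (Set.Finite.bddBelow (Set.finite_range F)) i0
    _ ≤ G i0 + m := hfg i0
    _ ≤ (⨅ i, G i) + m := add_le_add_left (le_ciInf hi0) m

private lemma myCiSup_le_ciSup_add {ι : Type*} [Finite ι] [Nonempty ι]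
    (F G : ι → ℝ) (m : ℝ) (hfg : ∀ i, F i ≤ G i + m) :
    (⨆ i, F i) ≤ (⨆ i, G i) + m :=
  ciSup_le fun i => (hfg i).trans
    (add_le_add_left (le_ciSup (Set.Finite.bddAbove (Set.finite_range G)) i) m)

private lemma mySub_le_max {P : Type*} [Finite P] [Nonempty P] (Q Q' : P → ℝ) (q : P) :
    Q q ≤ Q' q + max 0 (⨆ r, (Q r - Q' r)) := by
  have h1 : Q q - Q' q ≤ ⨆ r, (Q r - Q' r) :=
    le_ciSup (Set.Finite.bddAbove (Set.finite_range fun r => Q r - Q' r)) q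
  have h2 : (⨆ r, (Q r - Q' r)) ≤ max 0 (⨆ r, (Q r - Q' r)) := le_max_right _ _
  linarith

private lemma myMin_bound {a b b' m : ℝ} (hm : 0 ≤ m) (hb : b ≤ b' + m) :
    min a b ≤ min a b' + m := by
  rw [← min_add_add_right]
  exact min_le_min (by linarith) hb

/-- One-sided contraction bound for `Tpi`. -/
private lemma Tpi_sub_bound {X U A : Type*}
    [Fintype X] [Nonempty X] [Fintype U] [Nonempty U] [Fintype A] [Nonempty A]
    (f : X → U → A → X) (h : X → ℝ) {γ : ℝ} (hγ0 : 0 ≤ γ)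
    (π : X → U) (Q Q' : X × U × A → ℝ) (p : X × U × A) :
    Tpi f h γ π Q p ≤ Tpi f h γ π Q' p + γ * max 0 (⨆ q, (Q q - Q' q)) := by
  set M := max 0 (⨆ q, (Q q - Q' q)) with hM
  have hM0 : 0 ≤ M := le_max_left _ _
  set x' := f p.1 p.2.1 p.2.2
  have h1 : (⨅ a' : A, Q (x', π x', a')) ≤ (⨅ a' : A, Q' (x', π x', a')) + M :=
    myCiInf_le_ciInf_add _ _ _ fun a => mySub_le_max Q Q' _
  have h2 : min (h p.1) (⨅ a' : A, Q (x', π x', a')) ≤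
      min (h p.1) (⨅ a' : A, Q' (x', π x', a')) + M := myMin_bound hM0 h1
  have h3 := mul_le_mul_of_nonneg_left h2 hγ0
  rw [mul_add] at h3
  simp only [Tpi]
  linarith

/-- One-sided contraction bound for `Tb`. -/
private lemma Tb_sub_bound {X U A : Type*}
    [Fintype X] [Nonempty X] [Fintype U] [Nonempty U] [Fintype A] [Nonempty A]
    (f : X → U → A → X) (h : X → ℝ) {γ : ℝ} (hγ0 : 0 ≤ γ)
    (Q Q' : X × U × A → ℝ) (p : X × U × A) :
    Tb f h γ Q p ≤ Tb f h γ Q' p + γ * max 0 (⨆ q, (Q q - Q' q)) := by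
  set M := max 0 (⨆ q, (Q q - Q' q)) with hM
  have hM0 : 0 ≤ M := le_max_left _ _
  set x' := f p.1 p.2.1 p.2.2
  have h1 : (⨆ u' : U, ⨅ a' : A, Q (x', u', a')) ≤
      (⨆ u' : U, ⨅ a' : A, Q' (x', u', a')) + M :=
    myCiSup_le_ciSup_add _ _ _ fun u =>
      myCiInf_le_ciInf_add _ _ _ fun a => mySub_le_max Q Q' _
  have h2 : min (h p.1) (⨆ u' : U, ⨅ a' : A, Q (x', u', a')) ≤
      min (h p.1) (⨆ u' : U, ⨅ a' : A, Q' (x', u', a')) + M := myMin_bound hM0 h1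
  have h3 := mul_le_mul_of_nonneg_left h2 hγ0
  rw [mul_add] at h3
  simp only [Tb]
  linarith

/-- Any policy operator is dominated by the Bellman operator. -/
private lemma Tpi_le_Tb {X U A : Type*}
    [Fintype X] [Nonempty X] [Fintype U] [Nonempty U] [Fintype A] [Nonempty A]
    (f : X → U → A → X) (h : X → ℝ) {γ : ℝ} (hγ0 : 0 ≤ γ)
    (π : X → U) (Q : X × U × A → ℝ) (p : X × U × A) :
    Tpi f h γ π Q p ≤ Tb f h γ Q p := by
  set x' := f p.1 p.2.1 p.2.2
  have h1 : (⨅ a' : A, Q (x', π x', a')) ≤ ⨆ u' : U, ⨅ a' : A, Q (x', u', a') :=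
    le_ciSup (f := fun u' : U => ⨅ a' : A, Q (x', u', a'))
      (Set.Finite.bddAbove (Set.finite_range _)) (π x')
  have h2 : min (h p.1) (⨅ a' : A, Q (x', π x', a')) ≤
      min (h p.1) (⨆ u' : U, ⨅ a' : A, Q (x', u', a')) := min_le_min le_rfl h1
  have h3 := mul_le_mul_of_nonneg_left h2 hγ0
  simp only [Tpi, Tb]
  linarith

/-- Key comparison lemma: if `Q ≤ Q' + γ·max(0, sup(Q-Q'))` pointwise with `γ < 1`,
then `Q ≤ Q'` pointwise. -/
private lemma le_of_le_add_gamma {P : Type*} [Finite P] [Nonempty P] {γ : ℝ}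
    (hγ1 : γ < 1) {Q Q' : P → ℝ}
    (hb : ∀ p, Q p ≤ Q' p + γ * max 0 (⨆ q, (Q q - Q' q))) : ∀ p, Q p ≤ Q' p := by
  set c := ⨆ q, (Q q - Q' q) with hc
  have hcle : c ≤ γ * max 0 c := ciSup_le fun q => by linarith [hb q]
  have hc0 : c ≤ 0 := by
    by_contra hpos
    push_neg at hpos
    rw [max_eq_right hpos.le] at hcle
    nlinarith
  intro p
  have := hb p
  rw [max_eq_left hc0, mul_zero] at this
  linarith

/-- Convergence of safety policy iteration: if `Qseq k` is the fixed point of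
`T_h^{πseq k}` and `πseq (k+1)` is greedy with respect to `Qseq k`, then the sequence
`(Qseq k)` is pointwise nondecreasing and eventually equals the unique fixed point
`Qstar` of the safety Bellman operator `T_h`. -/
theorem safety_policy_iteration_converges {X U A : Type*}
    [Fintype X] [Nonempty X] [Fintype U] [Nonempty U] [Fintype A] [Nonempty A]
    (f : X → U → A → X) (h : X → ℝ) (γh : ℝ) (hγ : γh ∈ Set.Ioo (0 : ℝ) 1)
    (πseq : ℕ → X → U) (Qseq : ℕ → X × U × A → ℝ)
    (hfix : ∀ k : ℕ, Tpi f h γh (πseq k) (Qseq k) = Qseq k)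
    (hgreedy : ∀ (k : ℕ) (x : X),
      (⨅ a : A, Qseq k (x, πseq (k + 1) x, a)) = ⨆ u : U, ⨅ a : A, Qseq k (x, u, a))
    (Qstar : X × U × A → ℝ) (hQstar : Tb f h γh Qstar = Qstar) :
    (∀ (k : ℕ) (p : X × U × A), Qseq k p ≤ Qseq (k + 1) p) ∧
    (∃ K : ℕ, ∀ k ≥ K, Qseq k = Qstar) := by
  classical
  obtain ⟨hγ0, hγ1⟩ := hγ
  -- greedy policy realizes the Bellman operator
  have hTb_eq : ∀ k, Tb f h γh (Qseq k) = Tpi f h γh (πseq (k + 1)) (Qseq k) := by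
    intro k
    funext p
    simp only [Tb, Tpi]
    rw [hgreedy k (f p.1 p.2.1 p.2.2)]
  -- monotonicity
  have mono : ∀ (k : ℕ) (p : X × U × A), Qseq k p ≤ Qseq (k + 1) p := by
    intro k
    refine le_of_le_add_gamma hγ1 fun p => ?_
    calc Qseq k p = Tpi f h γh (πseq k) (Qseq k) p := (congrFun (hfix k) p).symm
      _ ≤ Tb f h γh (Qseq k) p := Tpi_le_Tb f h hγ0.le _ _ p
      _ = Tpi f h γh (πseq (k + 1)) (Qseq k) p := congrFun (hTb_eq k) p
      _ ≤ Tpi f h γh (πseq (k + 1)) (Qseq (k + 1)) p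
          + γh * max 0 (⨆ q, (Qseq k q - Qseq (k + 1) q)) :=
        Tpi_sub_bound f h hγ0.le _ _ _ p
      _ = Qseq (k + 1) p + γh * max 0 (⨆ q, (Qseq k q - Qseq (k + 1) q)) := by
          rw [congrFun (hfix (k + 1)) p]
  have hmono' : ∀ p : X × U × A, Monotone fun k => Qseq k p := fun p =>
    monotone_nat_of_le_succ fun k => mono k p
  -- every Qseq k is below Qstar
  have hle_star : ∀ (k : ℕ) (p : X × U × A), Qseq k p ≤ Qstar p := by
    intro k
    refine le_of_le_add_gamma hγ1 fun p => ?_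
    calc Qseq k p = Tpi f h γh (πseq k) (Qseq k) p := (congrFun (hfix k) p).symm
      _ ≤ Tb f h γh (Qseq k) p := Tpi_le_Tb f h hγ0.le _ _ p
      _ ≤ Tb f h γh Qstar p + γh * max 0 (⨆ q, (Qseq k q - Qstar q)) :=
        Tb_sub_bound f h hγ0.le _ _ p
      _ = Qstar p + γh * max 0 (⨆ q, (Qseq k q - Qstar q)) := by
          rw [congrFun hQstar p]
  -- uniqueness of fixed points of Tpi
  have uniq_pi : ∀ (π : X → U) (Q Q' : X × U × A → ℝ),
      Tpi f h γh π Q = Q → Tpi f h γh π Q' = Q' → Q = Q' := by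
    intro π Q Q' hQ hQ'
    have h1 : ∀ p, Q p ≤ Q' p := by
      refine le_of_le_add_gamma hγ1 fun p => ?_
      calc Q p = Tpi f h γh π Q p := (congrFun hQ p).symm
        _ ≤ Tpi f h γh π Q' p + γh * max 0 (⨆ q, (Q q - Q' q)) :=
          Tpi_sub_bound f h hγ0.le _ _ _ p
        _ = Q' p + γh * max 0 (⨆ q, (Q q - Q' q)) := by rw [congrFun hQ' p]
    have h2 : ∀ p, Q' p ≤ Q p := by
      refine le_of_le_add_gamma hγ1 fun p => ?_
      calc Q' p = Tpi f h γh π Q' p := (congrFun hQ' p).symm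
        _ ≤ Tpi f h γh π Q p + γh * max 0 (⨆ q, (Q' q - Q q)) :=
          Tpi_sub_bound f h hγ0.le _ _ _ p
        _ = Q p + γh * max 0 (⨆ q, (Q' q - Q q)) := by rw [congrFun hQ p]
    funext p
    exact le_antisymm (h1 p) (h2 p)
  -- Qseq is determined by πseq
  have hπQ : ∀ j k : ℕ, πseq j = πseq k → Qseq j = Qseq k := by
    intro j k hjk
    exact uniq_pi (πseq j) (Qseq j) (Qseq k) (hfix j) (by rw [hjk]; exact hfix k)
  -- finite range of Qseq
  have hfin : (Set.range Qseq).Finite := by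
    have hsub : Set.range Qseq ⊆ Set.range
        (fun π : X → U => if hh : ∃ k, πseq k = π then Qseq hh.choose else Qseq 0) := by
      rintro _ ⟨k, rfl⟩
      refine ⟨πseq k, ?_⟩
      have hex : ∃ j, πseq j = πseq k := ⟨k, rfl⟩
      simp only
      rw [dif_pos hex]
      exact hπQ _ _ hex.choose_spec
    exact (Set.finite_range _).subset hsub
  -- the sums
  set s : ℕ → ℝ := fun k => ∑ p : X × U × A, Qseq k p with hs
  have hsfin : (Set.range s).Finite := by
    have hsub : Set.range s ⊆ (fun Q : X × U × A → ℝ => ∑ p : X × U × A, Q p) '' Set.range Qseq := by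
      rintro _ ⟨k, rfl⟩
      exact ⟨Qseq k, ⟨k, rfl⟩, rfl⟩
    exact (hfin.image _).subset hsub
  have hsne : hsfin.toFinset.Nonempty := ⟨s 0, by simp [Set.Finite.mem_toFinset]⟩
  obtain ⟨K, hK⟩ : ∃ K, s K = hsfin.toFinset.max' hsne := by
    have : hsfin.toFinset.max' hsne ∈ hsfin.toFinset := hsfin.toFinset.max'_mem hsne
    rw [Set.Finite.mem_toFinset] at this
    obtain ⟨K, hK⟩ := this
    exact ⟨K, hK⟩
  -- s (K+1) = s K
  have hsK : s (K + 1) = s K := by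
    have h1 : s K ≤ s (K + 1) := Finset.sum_le_sum fun p _ => mono K p
    have h2 : s (K + 1) ≤ s K := by
      rw [hK]
      exact hsfin.toFinset.le_max' _ (by rw [Set.Finite.mem_toFinset]; exact ⟨K + 1, rfl⟩)
    linarith
  -- hence Qseq (K+1) = Qseq K
  have hQeq : Qseq (K + 1) = Qseq K := by
    funext p
    have hzero : ∑ q : X × U × A, (Qseq (K + 1) q - Qseq K q) = 0 := by
      rw [Finset.sum_sub_distrib]
      have := hsK
      simp only [hs] at this
      linarith
    have hnn : ∀ q ∈ Finset.univ, (0 : ℝ) ≤ Qseq (K + 1) q - Qseq K q :=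
      fun q _ => by linarith [mono K q]
    have := (Finset.sum_eq_zero_iff_of_nonneg hnn).mp hzero p (Finset.mem_univ p)
    linarith
  -- Qseq K is a fixed point of Tb
  have hfixK : Tb f h γh (Qseq K) = Qseq K := by
    rw [hTb_eq K, ← hQeq, hfix (K + 1)]
  -- Qseq K = Qstar by uniqueness of Tb fixed points
  have hKstar : Qseq K = Qstar := by
    have h2 : ∀ p, Qstar p ≤ Qseq K p := by
      refine le_of_le_add_gamma hγ1 fun p => ?_
      calc Qstar p = Tb f h γh Qstar p := (congrFun hQstar p).symm
        _ ≤ Tb f h γh (Qseq K) p + γh * max 0 (⨆ q, (Qstar q - Qseq K q)) :=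
          Tb_sub_bound f h hγ0.le _ _ p
        _ = Qseq K p + γh * max 0 (⨆ q, (Qstar q - Qseq K q)) := by
            rw [congrFun hfixK p]
    funext p
    exact le_antisymm (hle_star K p) (h2 p)
  refine ⟨mono, K, fun k hk => ?_⟩
  funext p
  refine le_antisymm (hle_star k p) ?_
  calc Qstar p = Qseq K p := (congrFun hKstar p).symm
    _ ≤ Qseq k p := hmono' p hk
end
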